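/- arXiv:1809.04947 — 4 statements merged into one kernel-verified Lean document; each statement's English description precedes it below -/
import Mathlib

section
/- The characteristics in the Lévy–Khintchine-type representation of a linear functional on C_c^∞(G) are unique: if (a, b, c, μ) and (a', b', c', μ') each consist of a nonnegative-definite symmetric real d×d matrix, a vector in ℝ^d, a nonnegative constant, and a Lévy measure on G, and if for all φ ∈ C_c^∞(G) one has Σ_{i,j} a_{ij}XᵢXⱼφ(e) + Σᵢ bᵢXᵢφ(e) − cφ(e) + ∫_G (φ(g) − φ(e) − Σᵢ xᵢ(g)Xᵢφ(e)) μ(dg) = Σ_{i,j} a'_{ij}XᵢXⱼφ(e) + Σᵢ b'ᵢXᵢφ(e) − c'φ(e) + ∫_G (φ(g) − φ(e) − Σᵢ xᵢ(g)Xᵢφ(e)) μ'(dg), then a = a', b = b', c = c' and μ = μ'. -/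
open MeasureTheory Filter Topology Matrix
open scoped Manifold ENNReal ZeroAtInfty BoundedContinuousFunction

noncomputable section

variable {E : Type} [NormedAddCommGroup E] [NormedSpace ℝ E] [FiniteDimensional ℝ E]
  {H : Type} [TopologicalSpace H] {I : ModelWithCorners ℝ E H}
  {G : Type} [TopologicalSpace G] [ChartedSpace H G] [Group G] [LieGroup I (⊤ : ℕ∞) G]
  [T2Space G] [LocallyCompactSpace G] [SecondCountableTopology G]
variable [MeasurableSpace G] [BorelSpace G]

/-- `μ` is a Lévy measure with respect to the canonical coordinate system `(U, x)`. -/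
def IsLevyMeasure [MeasurableSpace G] {d : ℕ} (U : Set G) (x : Fin d → C^(⊤ : ℕ∞)⟮I, G; ℝ⟯)
    (μ : Measure G) : Prop :=
  μ {(1 : G)} = 0 ∧ (∫⁻ g in U, ENNReal.ofReal (∑ i, (x i g) ^ 2) ∂μ) < ⊤ ∧ μ Uᶜ < ⊤

/-- `(U, x₁, …, x_d)` is a canonical coordinate system at the neutral element:
`U` is an open relatively compact neighbourhood of `1`, the `x i` are smooth and compactly
supported, `g ↦ (x₁ g, …, x_d g)` is a diffeomorphism from `U` onto an open neighbourhood
of `0` in `ℝ^d`, with `x i 1 = 0` and `X j (x i) 1 = δᵢⱼ`. -/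
structure IsCanonicalCoords {d : ℕ} (X : Fin d → LeftInvariantDerivation I G)
    (U : Set G) (x : Fin d → C^(⊤ : ℕ∞)⟮I, G; ℝ⟯) : Prop where
  isOpen : IsOpen U
  one_mem : (1 : G) ∈ U
  isCompact_closure : IsCompact (closure U)
  compact_support : ∀ i, HasCompactSupport (x i : G → ℝ)
  coord_one : ∀ i, x i 1 = 0
  deriv_one : ∀ i j, X j (x i) 1 = if i = j then (1 : ℝ) else 0
  injOn : Set.InjOn (fun g (i : Fin d) => x i g) U
  isOpen_image : IsOpen ((fun g (i : Fin d) => x i g) '' U)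
  smooth_inv : ∃ ψ : (Fin d → ℝ) → G, ContMDiffOn 𝓘(ℝ, Fin d → ℝ) I (⊤ : ℕ∞) ψ
      ((fun g (i : Fin d) => x i g) '' U) ∧ ∀ g ∈ U, ψ (fun i => x i g) = g

namespace LKaux

/-- Locality of left-invariant derivations: if `f` vanishes on an open set `V`, then so does
`D f` at every point of `V`. -/
theorem locality (D : LeftInvariantDerivation I G) (f : C^(⊤ : ℕ∞)⟮I, G; ℝ⟯)
    {V : Set G} (hV : IsOpen V) (hf : Set.EqOn f 0 V) {p : G} (hp : p ∈ V) :
    D f p = 0 := by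
  obtain ⟨W, hWo, hpW, hWV⟩ := normal_exists_closure_subset (isClosed_singleton (x := p)) hV
    (by simpa using hp)
  obtain ⟨χ, hχ0, hχ1, -⟩ := exists_contMDiffMap_zero_one_of_isClosed I (n := (⊤ : ℕ∞)) (isClosed_closure (s := W))
    (isClosed_compl_iff.mpr hV) (Set.disjoint_compl_right_iff_subset.mpr hWV)
  have hfχ : f = χ * f := by
    ext g
    by_cases hg : g ∈ V
    · show f g = χ g * f g
      simp [(hf hg : f g = 0)]
    · have h1 : χ g = 1 := hχ1 (by simpa using hg)
      show f g = χ g * f g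
      simp [h1]
  have h2 := congrArg (fun ψ => D ψ p) hfχ
  simp only [LeftInvariantDerivation.leibniz] at h2
  have hχp : χ p = 0 := hχ0 (subset_closure (hpW rfl))
  have hfp : f p = 0 := hf hp
  rw [h2]
  show χ p * (D f) p + f p * (D χ) p = 0
  simp [hχp, hfp]

/-- Quantitative non-degeneracy of canonical coordinates: away from any neighbourhood
of `1` (but inside `U`), the squared coordinates are bounded below. -/
theorem small_coords {d : ℕ} {X : Fin d → LeftInvariantDerivation I G}
    {U : Set G} {x : Fin d → C^(⊤ : ℕ∞)⟮I, G; ℝ⟯} (hc : IsCanonicalCoords X U x)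
    {V : Set G} (hV : IsOpen V) (h1V : (1 : G) ∈ V) :
    ∃ ε : ℝ, 0 < ε ∧ ∀ g ∈ U \ V, ε ≤ ∑ i, x i g ^ 2 := by
  obtain ⟨ψ, hψ, hψx⟩ := hc.smooth_inv
  set F : G → (Fin d → ℝ) := fun g i => x i g with hF
  have hF1 : F 1 = 0 := by funext i; simp [hF, hc.coord_one i]
  have hA : IsOpen ((F '' U) ∩ ψ ⁻¹' V) :=
    (hψ.continuousOn).isOpen_inter_preimage hc.isOpen_image hV
  have h0A : (0 : Fin d → ℝ) ∈ (F '' U) ∩ ψ ⁻¹' V := by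
    refine ⟨⟨1, hc.one_mem, hF1⟩, ?_⟩
    have h := hψx 1 hc.one_mem
    rw [show (fun i => x i (1:G)) = F 1 from rfl, hF1] at h
    simpa [Set.mem_preimage, h] using h1V
  obtain ⟨δ, hδ0, hδ⟩ := Metric.isOpen_iff.mp hA 0 h0A
  refine ⟨δ ^ 2, by positivity, fun g hg => ?_⟩
  by_contra hlt
  push_neg at hlt
  have hFg : F g ∈ Metric.ball (0 : Fin d → ℝ) δ := by
    rw [mem_ball_zero_iff]
    rw [pi_norm_lt_iff hδ0]
    intro i
    have h1 : (x i g) ^ 2 ≤ ∑ j, x j g ^ 2 :=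
      Finset.single_le_sum (fun j _ => sq_nonneg (x j g)) (Finset.mem_univ i)
    have h2 : (x i g) ^ 2 < δ ^ 2 := lt_of_le_of_lt h1 hlt
    simpa using abs_lt_of_sq_lt_sq h2 (le_of_lt hδ0)
  have := hδ hFg
  have hgV : ψ (F g) ∈ V := this.2
  rw [hψx g hg.1] at hgV
  exact hg.2 hgV

/-- A Lévy measure is finite outside every neighbourhood of `1`. -/
theorem finite_off {d : ℕ} {U : Set G} {x : Fin d → C^(⊤ : ℕ∞)⟮I, G; ℝ⟯} {μ : Measure G}
    (hlev : (∫⁻ g in U, ENNReal.ofReal (∑ i, (x i g) ^ 2) ∂μ) < ⊤) (hUc : μ Uᶜ < ⊤)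
    {V : Set G} {ε : ℝ} (hε : 0 < ε) (hVε : ∀ g ∈ U \ V, ε ≤ ∑ i, x i g ^ 2) :
    μ Vᶜ < ⊤ := by
  have hsub : Vᶜ ⊆ Uᶜ ∪ (U \ V) := by
    intro g hg
    by_cases hgU : g ∈ U
    · exact Or.inr ⟨hgU, hg⟩
    · exact Or.inl hgU
  refine lt_of_le_of_lt ((measure_mono hsub).trans (measure_union_le _ _)) ?_
  refine ENNReal.add_lt_top.mpr ⟨hUc, ?_⟩
  set f : G → ℝ≥0∞ := fun g => ENNReal.ofReal (∑ i, (x i g) ^ 2) with hf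
  have hfm : Measurable f := by
    apply Measurable.ennreal_ofReal
    exact Finset.measurable_sum _ (fun i _ => ((x i).contMDiff.continuous.pow 2).measurable)
  have h1 : μ (U \ V) ≤ (μ.restrict U) {g | ENNReal.ofReal ε ≤ f g} := by
    rw [show {g | ENNReal.ofReal ε ≤ f g} = f ⁻¹' (Set.Ici (ENNReal.ofReal ε)) from rfl,
      Measure.restrict_apply (hfm measurableSet_Ici)]
    refine measure_mono fun g hg => ⟨?_, hg.1⟩
    exact ENNReal.ofReal_le_ofReal (hVε g hg)
  refine lt_of_le_of_lt h1 ?_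
  refine lt_of_le_of_lt (meas_ge_le_lintegral_div hfm.aemeasurable
    (by simp [ENNReal.ofReal_eq_zero, not_le, hε]) ENNReal.ofReal_ne_top) ?_
  exact ENNReal.div_lt_top hlev.ne (by simp [ENNReal.ofReal_eq_zero, not_le, hε])

/-- Integrals against smooth compactly supported functions vanishing near `1` determine the
measure of compact sets away from `1`. -/
theorem measure_compact_eq {μ μ' : Measure G}
    (hfin : ∀ V : Set G, IsOpen V → (1 : G) ∈ V → μ Vᶜ < ⊤ ∧ μ' Vᶜ < ⊤)
    (hint : ∀ φ : C^(⊤ : ℕ∞)⟮I, G; ℝ⟯, HasCompactSupport (φ : G → ℝ) →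
      (∃ V : Set G, IsOpen V ∧ (1 : G) ∈ V ∧ Set.EqOn (φ : G → ℝ) 0 V) →
      ∫ g, φ g ∂μ = ∫ g, φ g ∂μ')
    {K : Set G} (hK : IsCompact K) (h1K : (1 : G) ∉ K) : μ K = μ' K := by
  letI : MetricSpace G := TopologicalSpace.metrizableSpaceMetric G
  rcases K.eq_empty_or_nonempty with rfl | hKne
  · simp
  obtain ⟨L, hL, hKL, hL1⟩ := exists_compact_between hK isOpen_compl_singleton
    (by simpa using h1K)
  have hLc : IsClosed L := hL.isClosed
  have h1L : (1 : G) ∉ L := fun h => by simpa using hL1 h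
  have hμL : μ L < ⊤ ∧ μ' L < ⊤ := by
    have := hfin Lᶜ hLc.isOpen_compl (by simpa using h1L)
    simpa using this
  set O : ℕ → Set G := fun n => {g | Metric.infDist g K < 1 / (n + 1)} ∩ interior L with hO
  have hOopen : ∀ n, IsOpen (O n) :=
    fun n => ((isOpen_lt (Metric.continuous_infDist_pt K) continuous_const)).inter isOpen_interior
  have hKO : ∀ n, K ⊆ O n := by
    intro n g hg
    refine ⟨?_, hKL hg⟩
    simp only [Set.mem_setOf_eq]
    rw [Metric.infDist_zero_of_mem hg]
    positivity
  have hf : ∀ n : ℕ, ∃ f : C^(⊤ : ℕ∞)⟮I, G; ℝ⟯, Set.EqOn (f : G → ℝ) 0 (O n)ᶜ ∧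
      Set.EqOn (f : G → ℝ) 1 K ∧ ∀ g, f g ∈ Set.Icc (0:ℝ) 1 := by
    intro n
    exact exists_contMDiffMap_zero_one_of_isClosed I (hOopen n).isClosed_compl hK.isClosed
      (by rw [Set.disjoint_compl_left_iff_subset]; exact hKO n)
  choose f hf0 hf1 hf01 using hf
  have hsupp : ∀ n, Function.support (f n : G → ℝ) ⊆ L := by
    intro n g hg
    by_contra hgL
    exact hg (hf0 n (fun h => hgL (interior_subset h.2)))
  have hcs : ∀ n, HasCompactSupport (f n : G → ℝ) := by
    intro n
    exact HasCompactSupport.of_support_subset_isCompact hL (hsupp n)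
  have hvan : ∀ n, ∃ V : Set G, IsOpen V ∧ (1 : G) ∈ V ∧ Set.EqOn ((f n) : G → ℝ) 0 V := by
    intro n
    exact ⟨Lᶜ, hLc.isOpen_compl, by simpa using h1L,
      fun g hg => hf0 n (fun h => hg (interior_subset h.2))⟩
  have key : ∀ (ν : Measure G), ν L < ⊤ →
      Tendsto (fun n => ∫ g, f n g ∂ν) atTop (𝓝 ((ν K).toReal)) := by
    intro ν hνL
    have hbound : Integrable (L.indicator (fun _ => (1:ℝ))) ν := by
      rw [integrable_indicator_iff hLc.measurableSet]
      exact integrableOn_const hνL.ne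
    have hlim : Tendsto (fun n => ∫ g, f n g ∂ν) atTop
        (𝓝 (∫ g, K.indicator (fun _ => (1:ℝ)) g ∂ν)) := by
      refine tendsto_integral_of_dominated_convergence _ ?_ hbound ?_ ?_
      · exact fun n => ((f n).contMDiff.continuous).aestronglyMeasurable
      · intro n
        refine Eventually.of_forall fun g => ?_
        by_cases hg : g ∈ L
        · simp only [Set.indicator_of_mem hg]
          rw [Real.norm_eq_abs, abs_of_nonneg (hf01 n g).1]
          exact (hf01 n g).2
        · have : (f n) g = 0 := by
            by_contra h
            exact hg (hsupp n h)
          simp [this, Set.indicator_of_notMem hg]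
      · refine Eventually.of_forall fun g => ?_
        by_cases hg : g ∈ K
        · simp only [Set.indicator_of_mem hg]
          have : ∀ n, (f n) g = 1 := fun n => hf1 n hg
          simpa [this] using tendsto_const_nhds
        · simp only [Set.indicator_of_notMem hg]
          have hd : 0 < Metric.infDist g K :=
            (hK.isClosed.notMem_iff_infDist_pos hKne).mp hg
          obtain ⟨n, hn⟩ := exists_nat_gt (1 / Metric.infDist g K)
          have hev : ∀ m, n ≤ m → (f m) g = 0 := by
            intro m hm
            refine hf0 m ?_
            intro hgO
            have h1 : Metric.infDist g K < 1 / (m + 1) := hgO.1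
            have h2 : 1 / ((m : ℝ) + 1) ≤ 1 / (n + 1) := by
              apply one_div_le_one_div_of_le (by positivity)
              exact_mod_cast by omega
            have h3 : (1:ℝ) / (n + 1) < Metric.infDist g K := by
              rw [div_lt_iff₀ (by positivity)]
              rw [div_lt_iff₀ hd] at hn
              nlinarith [hn]
            linarith
          refine tendsto_atTop_of_eventually_const (i₀ := n) hev
    rwa [integral_indicator_const _ hK.isClosed.measurableSet, smul_eq_mul, mul_one] at hlim
  have h1 := key μ hμL.1
  have h2 := key μ' hμL.2
  have heqint : ∀ n, ∫ g, f n g ∂μ = ∫ g, f n g ∂μ' := fun n => hint (f n) (hcs n) (hvan n)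
  simp only [heqint] at h1
  have := tendsto_nhds_unique h1 h2
  have hμK : μ K ≠ ⊤ := (lt_of_le_of_lt (measure_mono (hKL.trans interior_subset)) hμL.1).ne
  have hμ'K : μ' K ≠ ⊤ := (lt_of_le_of_lt (measure_mono (hKL.trans interior_subset)) hμL.2).ne
  exact (ENNReal.toReal_eq_toReal_iff' hμK hμ'K).mp this

/-- Two measures vanishing at `1`, finite outside neighbourhoods of `1`, and agreeing on
compact sets away from `1`, are equal. -/
theorem measures_eq {μ μ' : Measure G}
    (hμ1 : μ {(1:G)} = 0) (hμ'1 : μ' {(1:G)} = 0)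
    (hfin : ∀ V : Set G, IsOpen V → (1 : G) ∈ V → μ Vᶜ < ⊤ ∧ μ' Vᶜ < ⊤)
    (hcompact : ∀ K : Set G, IsCompact K → (1 : G) ∉ K → μ K = μ' K) : μ = μ' := by
  obtain ⟨V, hVbasis, hVanti⟩ := (𝓝 (1 : G)).exists_antitone_basis
  set W : ℕ → Set G := fun n => interior (V n) with hW
  have hWopen : ∀ n, IsOpen (W n) := fun n => isOpen_interior
  have h1W : ∀ n, (1 : G) ∈ W n :=
    fun n => mem_interior_iff_mem_nhds.mpr (hVbasis.mem_of_mem trivial)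
  have hWanti : Antitone W := fun m n h => interior_mono (hVanti h)
  have hclosed : ∀ F : Set G, IsClosed F → (1 : G) ∉ F → μ F = μ' F := by
    intro F hF h1F
    have hFeq : F = ⋃ m, F ∩ compactCovering G m := by
      rw [← Set.inter_iUnion, iUnion_compactCovering, Set.inter_univ]
    have hmono : Monotone (fun m => F ∩ compactCovering G m) :=
      fun m n h => Set.inter_subset_inter_right _ (compactCovering_subset G h)
    have h1 : μ F = ⨆ m, μ (F ∩ compactCovering G m) := by
      nth_rewrite 1 [hFeq]
      rw [hmono.measure_iUnion]
    have h2 : μ' F = ⨆ m, μ' (F ∩ compactCovering G m) := by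
      nth_rewrite 1 [hFeq]
      rw [hmono.measure_iUnion]
    rw [h1, h2]
    refine iSup_congr fun m => ?_
    exact hcompact _ ((isCompact_compactCovering G m).inter_left hF)
      (fun h => h1F h.1)
  have hAway : ∀ n, ∀ s : Set G, MeasurableSet s → s ⊆ (W n)ᶜ → μ s = μ' s := by
    intro n s hs hsW
    have hμfin := hfin (W n) (hWopen n) (h1W n)
    haveI : IsFiniteMeasure (μ.restrict (W n)ᶜ) :=
      ⟨by rw [Measure.restrict_apply_univ]; exact hμfin.1⟩
    haveI : IsFiniteMeasure (μ'.restrict (W n)ᶜ) :=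
      ⟨by rw [Measure.restrict_apply_univ]; exact hμfin.2⟩
    have hres : μ.restrict (W n)ᶜ s = μ s := by
      rw [Measure.restrict_apply hs, Set.inter_eq_self_of_subset_left hsW]
    have hres' : μ'.restrict (W n)ᶜ s = μ' s := by
      rw [Measure.restrict_apply hs, Set.inter_eq_self_of_subset_left hsW]
    rw [← hres, ← hres']
    rw [MeasurableSet.measure_eq_iSup_isClosed_of_ne_top hs (measure_ne_top _ _),
      MeasurableSet.measure_eq_iSup_isClosed_of_ne_top hs (measure_ne_top _ _)]
    refine iSup_congr fun F => ?_
    refine iSup_congr fun hFs => ?_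
    refine iSup_congr fun hF => ?_
    have h1F : (1 : G) ∉ F := fun h => (hsW (hFs h)) (h1W n)
    have e1 : μ.restrict (W n)ᶜ F = μ F := by
      rw [Measure.restrict_apply hF.measurableSet,
        Set.inter_eq_self_of_subset_left (hFs.trans hsW)]
    have e2 : μ'.restrict (W n)ᶜ F = μ' F := by
      rw [Measure.restrict_apply hF.measurableSet,
        Set.inter_eq_self_of_subset_left (hFs.trans hsW)]
    rw [e1, e2]
    exact hclosed F hF h1F
  ext s hs
  have hdiff : ∀ (ν : Measure G), ν {(1:G)} = 0 → ν s = ν (s \ {1}) :=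
    fun ν hν => (measure_diff_null hν).symm
  have hsU : s \ {1} = ⋃ n, s \ W n := by
    ext g
    simp only [Set.mem_diff, Set.mem_singleton_iff, Set.mem_iUnion]
    constructor
    · rintro ⟨hgs, hg1⟩
      obtain ⟨n, hn⟩ := hVbasis.mem_iff.mp (isOpen_compl_singleton.mem_nhds
        (by simpa using Ne.symm hg1))
      exact ⟨n, hgs, fun h => hn.2 (interior_subset h) rfl⟩
    · rintro ⟨n, hgs, hgW⟩
      exact ⟨hgs, fun h => hgW (h ▸ h1W n)⟩
  have hmono : Monotone (fun n => s \ W n) := fun m n h => Set.diff_subset_diff_right (hWanti h)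
  rw [hdiff μ hμ1, hdiff μ' hμ'1, hsU,
    hmono.measure_iUnion, hmono.measure_iUnion]
  refine iSup_congr fun n => ?_
  exact hAway n _ (hs.diff (hWopen n).measurableSet)
    (fun g hg => fun h => hg.2 h)

theorem smooth_add_apply (f g : C^(⊤ : ℕ∞)⟮I, G; ℝ⟯) (p : G) : (f + g) p = f p + g p := rfl

theorem smooth_smul_apply (f g : C^(⊤ : ℕ∞)⟮I, G; ℝ⟯) (p : G) : (f • g) p = f p * g p := rfl

theorem smooth_mul_apply (f g : C^(⊤ : ℕ∞)⟮I, G; ℝ⟯) (p : G) : (f * g) p = f p * g p := rfl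

/-- Second derivative of a product of two smooth functions, via the Leibniz rule. -/
theorem deriv_mul (X Y : LeftInvariantDerivation I G) (f g : C^(⊤ : ℕ∞)⟮I, G; ℝ⟯) (p : G) :
    X (Y (f * g)) p = f p * (X (Y g)) p + (Y g) p * (X f) p
      + (g p * (X (Y f)) p + (Y f) p * (X g) p) := by
  have h2 : ∀ u v : C^(⊤ : ℕ∞)⟮I, G; ℝ⟯, ∀ Z : LeftInvariantDerivation I G,
      Z (u • v) = u • Z v + v • Z u := by
    intro u v Z; rw [smul_eq_mul]
    exact LeftInvariantDerivation.leibniz (X := Z) (f := u) (f' := v)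
  rw [LeftInvariantDerivation.leibniz (X := Y) (f := f) (f' := g), map_add, h2, h2]
  simp only [smooth_add_apply, smooth_smul_apply]

/-- First derivative of a product of two smooth functions. -/
theorem deriv_mul_fst (X : LeftInvariantDerivation I G) (f g : C^(⊤ : ℕ∞)⟮I, G; ℝ⟯) (p : G) :
    X (f * g) p = f p * (X g) p + g p * (X f) p := by
  rw [LeftInvariantDerivation.leibniz (X := X) (f := f) (f' := g)]
  simp only [smooth_add_apply, smooth_smul_apply]

end LKaux

/-- The characteristics `(a, b, c, μ)` in the Lévy–Khintchine type
representation of a linear functional on `C_c^∞(G)` are unique. -/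
theorem levy_khintchine_characteristics_unique
    {d : ℕ} (X : Module.Basis (Fin d) ℝ (LeftInvariantDerivation I G))
    (U : Set G) (x : Fin d → C^(⊤ : ℕ∞)⟮I, G; ℝ⟯) (hcoords : IsCanonicalCoords (fun i => X i) U x)
    (a a' : Matrix (Fin d) (Fin d) ℝ) (b b' : Fin d → ℝ) (c c' : ℝ) (μ μ' : Measure G)
    (ha : a.IsSymm) (ha' : a'.IsSymm)
    (hpsd : ∀ ξ : Fin d → ℝ, 0 ≤ ξ ⬝ᵥ a.mulVec ξ)
    (hpsd' : ∀ ξ : Fin d → ℝ, 0 ≤ ξ ⬝ᵥ a'.mulVec ξ)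
    (hc : 0 ≤ c) (hc' : 0 ≤ c')
    (hμ : IsLevyMeasure U x μ) (hμ' : IsLevyMeasure U x μ')
    (heq : ∀ φ : C^(⊤ : ℕ∞)⟮I, G; ℝ⟯, HasCompactSupport (φ : G → ℝ) →
      (∑ i, ∑ j, a i j * X i (X j φ) 1) + (∑ i, b i * X i φ 1) - c * φ 1 +
          ∫ g, (φ g - φ 1 - ∑ i, x i g * X i φ 1) ∂μ
        = (∑ i, ∑ j, a' i j * X i (X j φ) 1) + (∑ i, b' i * X i φ 1) - c' * φ 1 +
          ∫ g, (φ g - φ 1 - ∑ i, x i g * X i φ 1) ∂μ') :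
    a = a' ∧ b = b' ∧ c = c' ∧ μ = μ' := by
  obtain ⟨hμ1, hμ2, hμ3⟩ := hμ
  obtain ⟨hμ'1, hμ'2, hμ'3⟩ := hμ'
  have hD : ∀ i j, X j (x i) 1 = if i = j then (1:ℝ) else 0 := hcoords.deriv_one
  -- finiteness off neighbourhoods of 1
  have hfin : ∀ V : Set G, IsOpen V → (1:G) ∈ V → μ Vᶜ < ⊤ ∧ μ' Vᶜ < ⊤ := by
    intro V hV h1V
    obtain ⟨ε, hε, hVε⟩ := LKaux.small_coords hcoords hV h1V
    exact ⟨LKaux.finite_off hμ2 hμ3 hε hVε, LKaux.finite_off hμ'2 hμ'3 hε hVε⟩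
  -- integrals of test functions vanishing near 1 agree
  have hint : ∀ φ : C^(⊤ : ℕ∞)⟮I, G; ℝ⟯, HasCompactSupport (φ : G → ℝ) →
      (∃ V : Set G, IsOpen V ∧ (1 : G) ∈ V ∧ Set.EqOn (φ : G → ℝ) 0 V) →
      ∫ g, φ g ∂μ = ∫ g, φ g ∂μ' := by
    rintro φ hφ ⟨V, hVo, h1V, hV0⟩
    have h1 : φ 1 = 0 := hV0 h1V
    have h2 : ∀ i : Fin d, X i φ 1 = 0 := fun i => LKaux.locality (X i) φ hVo hV0 h1V
    have h3 : ∀ i j : Fin d, X i (X j φ) 1 = 0 := fun i j =>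
      LKaux.locality (X i) (X j φ) hVo (fun p hp => LKaux.locality (X j) φ hVo hV0 hp) h1V
    have key := heq φ hφ
    simp only [h1, h2, h3, mul_zero, Finset.sum_const_zero, sub_zero, add_zero, zero_add,
      zero_sub, neg_zero] at key
    simpa using key
  -- the Lévy measures agree
  have hμeq : μ = μ' := LKaux.measures_eq hμ1 hμ'1 hfin
    (fun K hK h1K => LKaux.measure_compact_eq hfin hint hK h1K)
  -- the reduced identity on second-order data
  have hQ : ∀ φ : C^(⊤ : ℕ∞)⟮I, G; ℝ⟯, HasCompactSupport (φ : G → ℝ) →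
      (∑ i, ∑ j, a i j * X i (X j φ) 1) + (∑ i, b i * X i φ 1) - c * φ 1
      = (∑ i, ∑ j, a' i j * X i (X j φ) 1) + (∑ i, b' i * X i φ 1) - c' * φ 1 := by
    intro φ hφ
    have key := heq φ hφ
    rw [hμeq] at key
    exact add_right_cancel key
  -- a = a'
  have haa : a = a' := by
    ext k l
    have hcs : HasCompactSupport ((x k * x l : C^(⊤ : ℕ∞)⟮I, G; ℝ⟯) : G → ℝ) := by
      have hco : ((x k * x l : C^(⊤ : ℕ∞)⟮I, G; ℝ⟯) : G → ℝ)
          = (x k : G → ℝ) * (x l : G → ℝ) := rfl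
      rw [hco]
      exact (hcoords.compact_support k).mul_right
    have key := hQ _ hcs
    have h0 : (x k * x l : C^(⊤ : ℕ∞)⟮I, G; ℝ⟯) 1 = 0 := by
      rw [LKaux.smooth_mul_apply, hcoords.coord_one]; ring
    have h1 : ∀ i : Fin d, X i (x k * x l) 1 = 0 := by
      intro i
      rw [LKaux.deriv_mul_fst, hcoords.coord_one, hcoords.coord_one]; ring
    have hev : ∀ i j : Fin d, X i (X j (x k * x l)) 1 =
        (if k = i then (1:ℝ) else 0) * (if l = j then 1 else 0)
          + (if l = i then (1:ℝ) else 0) * (if k = j then 1 else 0) := by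
      intro i j
      rw [LKaux.deriv_mul, hcoords.coord_one, hcoords.coord_one, hD, hD, hD, hD]
      ring
    simp only [hev, h1, h0, mul_zero, Finset.sum_const_zero, add_zero, sub_zero] at key
    have hsum : ∀ A : Matrix (Fin d) (Fin d) ℝ,
        (∑ i, ∑ j, A i j * ((if k = i then (1:ℝ) else 0) * (if l = j then 1 else 0)
          + (if l = i then (1:ℝ) else 0) * (if k = j then 1 else 0))) = A k l + A l k := by
      intro A
      have : ∀ i : Fin d, (∑ j, A i j * ((if k = i then (1:ℝ) else 0) * (if l = j then 1 else 0)
          + (if l = i then (1:ℝ) else 0) * (if k = j then 1 else 0)))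
          = (if k = i then (1:ℝ) else 0) * A i l + (if l = i then (1:ℝ) else 0) * A i k := by
        intro i
        rw [Finset.sum_congr rfl (fun j _ => by ring :
          ∀ j ∈ Finset.univ, A i j * ((if k = i then (1:ℝ) else 0) * (if l = j then 1 else 0)
            + (if l = i then (1:ℝ) else 0) * (if k = j then 1 else 0))
          = (if k = i then (1:ℝ) else 0) * ((if l = j then (1:ℝ) else 0) * A i j)
            + (if l = i then (1:ℝ) else 0) * ((if k = j then (1:ℝ) else 0) * A i j))]
        rw [Finset.sum_add_distrib, ← Finset.mul_sum, ← Finset.mul_sum]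
        congr 1
        · congr 1
          simp [eq_comm]
        · congr 1
          simp [eq_comm]
      rw [Finset.sum_congr rfl (fun i _ => this i), Finset.sum_add_distrib]
      simp [eq_comm]
    rw [hsum a, hsum a'] at key
    have hsymm : a l k = a k l := by
      have := congrFun (congrFun ha k) l
      simpa [Matrix.transpose_apply] using this
    have hsymm' : a' l k = a' k l := by
      have := congrFun (congrFun ha' k) l
      simpa [Matrix.transpose_apply] using this
    rw [hsymm, hsymm'] at key
    linarith
  -- b = b'
  have hbb : b = b' := by
    funext k
    have key := hQ (x k) (hcoords.compact_support k)
    rw [haa, hcoords.coord_one] at key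
    have hbsum : ∀ B : Fin d → ℝ, (∑ i, B i * X i (x k) 1) = B k := by
      intro B
      rw [Finset.sum_congr rfl (fun i _ => by rw [hD])]
      simp [eq_comm]
    rw [hbsum b, hbsum b'] at key
    simp only [mul_zero, sub_zero] at key
    exact add_left_cancel key
  -- c = c'
  have hcc : c = c' := by
    obtain ⟨N, hNc, hN1⟩ := exists_compact_mem_nhds (1 : G)
    have h1N : (1:G) ∈ interior N := mem_interior_iff_mem_nhds.mpr hN1
    obtain ⟨φ₀, hφ0, hφ1, -⟩ := exists_contMDiffMap_zero_one_of_isClosed I (n := (⊤ : ℕ∞))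
      (isOpen_interior (s := N)).isClosed_compl isClosed_singleton
      (by rw [Set.disjoint_compl_left_iff_subset]; simpa using h1N)
    have hcs : HasCompactSupport (φ₀ : G → ℝ) := by
      apply HasCompactSupport.of_support_subset_isCompact hNc
      intro g hg
      by_contra hgN
      exact hg (hφ0 (fun h => hgN (interior_subset h)))
    have key := hQ φ₀ hcs
    rw [haa, hbb] at key
    have h1 : φ₀ 1 = 1 := hφ1 rfl
    rw [h1] at key
    simp only [mul_one] at key
    linarith [key]
  exact ⟨haa, hbb, hcc, hμeq⟩
end
end

section
/- Every linear functional T : C_c^∞(G) → ℝ of the form Tφ = Σ_{i,j=1}^d a_{ij}XᵢXⱼφ(e) + Σ_{i=1}^d bᵢXᵢφ(e) − cφ(e) + ∫_G (φ(g) − φ(e) − Σ_{i=1}^d xᵢ(g)Xᵢφ(e)) μ(dg), where c ≥ 0, b ∈ ℝ^d, a = (a_{ij}) is a nonnegative-definite symmetric real d×d matrix, and μ is a Lévy measure on G, satisfies the positive maximum principle. -/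
open MeasureTheory Filter Topology Matrix
open scoped Manifold ENNReal ZeroAtInfty BoundedContinuousFunction

noncomputable section
set_option maxRecDepth 10000
set_option maxHeartbeats 1000000
set_option synthInstance.maxHeartbeats 400000
set_option linter.unusedSectionVars false


variable {E : Type} [NormedAddCommGroup E] [NormedSpace ℝ E] [FiniteDimensional ℝ E]
  {H : Type} [TopologicalSpace H] {I : ModelWithCorners ℝ E H}
  {G : Type} [TopologicalSpace G] [ChartedSpace H G] [Group G] [LieGroup I (⊤ : ℕ∞) G]
  [T2Space G] [LocallyCompactSpace G] [SecondCountableTopology G]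
variable [MeasurableSpace G] [BorelSpace G]

/-- A linear functional on `C_c^∞(G)` satisfies the positive maximum principle. -/
def PMPfunctional (T : C^(⊤ : ℕ∞)⟮I, G; ℝ⟯ → ℝ) : Prop :=
  ∀ f : C^(⊤ : ℕ∞)⟮I, G; ℝ⟯, HasCompactSupport (f : G → ℝ) →
    (∀ τ : G, f τ ≤ f 1) → 0 ≤ f 1 → T f ≤ 0

/-- The auxiliary parametric integral. -/
def paux {d : ℕ} {W : Type} [NormedAddCommGroup W] [NormedSpace ℝ W] (g : (Fin d → ℝ) → W) (k : ℕ)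
    (y : Fin d → ℝ) : W :=
  ∫ t in (0:ℝ)..1, t ^ k • g (t • y)

lemma parDeriv {d : ℕ} {W : Type} [NormedAddCommGroup W] [NormedSpace ℝ W] [CompleteSpace W]
    (k : ℕ) (g : (Fin d → ℝ) → W) (hg : ContDiff ℝ (⊤:ℕ∞) g) (hgc : HasCompactSupport g) (y₀ : Fin d → ℝ) :
    HasFDerivAt (paux g k) (paux (fderiv ℝ g) (k+1) y₀) y₀ := by
  obtain ⟨C, hC⟩ := (hgc.fderiv ℝ).exists_bound_of_continuous (hg.continuous_fderiv (by simp))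
  have hdiff : ∀ (t : ℝ), ∀ x : Fin d → ℝ,
      HasFDerivAt (fun x => t ^ k • g (t • x)) (t ^ (k+1) • fderiv ℝ g (t • x)) x := by
    intro t x
    have h1 : HasFDerivAt (fun y : Fin d → ℝ => t • y) (t • ContinuousLinearMap.id ℝ (Fin d → ℝ)) x := by
      simpa using (t • ContinuousLinearMap.id ℝ (Fin d → ℝ)).hasFDerivAt (x := x)
    have h2 : HasFDerivAt g (fderiv ℝ g (t • x)) (t • x) :=
      (hg.differentiable (by simp) (t • x)).hasFDerivAt
    have h3 := (h2.comp x h1).const_smul (t ^ k)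
    have heq : t ^ (k+1) • fderiv ℝ g (t • x)
        = t ^ k • ((fderiv ℝ g (t • x)).comp (t • ContinuousLinearMap.id ℝ (Fin d → ℝ))) := by
      ext v
      rw [ContinuousLinearMap.smul_apply, ContinuousLinearMap.smul_apply,
        ContinuousLinearMap.comp_apply, ContinuousLinearMap.smul_apply,
        ContinuousLinearMap.id_apply, (fderiv ℝ g (t • x)).map_smul, smul_smul, pow_succ]
    rw [heq]
    exact h3
  have key := intervalIntegral.hasFDerivAt_integral_of_dominated_of_fderiv_le
    (𝕜 := ℝ) (μ := volume) (a := 0) (b := 1) (s := Metric.ball y₀ 1)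
    (bound := fun _ => C)
    (F := fun x t => t ^ k • g (t • x)) (F' := fun x t => t ^ (k+1) • fderiv ℝ g (t • x))
    (x₀ := y₀) (Metric.ball_mem_nhds y₀ one_pos)
    (Eventually.of_forall fun x =>
      ((continuous_pow k).smul ((hg.continuous).comp (continuous_id.smul continuous_const))).aestronglyMeasurable)
    (((continuous_pow k).smul ((hg.continuous).comp (continuous_id.smul continuous_const))).intervalIntegrable _ _)
    (((continuous_pow (k+1)).smul ((hg.continuous_fderiv (by simp)).comp
      (continuous_id.smul continuous_const))).aestronglyMeasurable)
    (by
      refine Eventually.of_forall fun t ht x _ => ?_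
      rw [Set.uIoc_of_le zero_le_one] at ht
      have h1 : |t ^ (k+1)| ≤ 1 := by
        rw [abs_pow]
        exact pow_le_one₀ (abs_nonneg t) (abs_le.2 ⟨by linarith [ht.1], ht.2⟩)
      calc ‖t ^ (k+1) • fderiv ℝ g (t • x)‖ = |t ^ (k+1)| * ‖fderiv ℝ g (t • x)‖ := by
            rw [norm_smul (t ^ (k+1)) (fderiv ℝ g (t • x)), Real.norm_eq_abs]
        _ ≤ 1 * C := mul_le_mul h1 (hC _) (norm_nonneg _) zero_le_one
        _ = C := one_mul C)
    (intervalIntegrable_const)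
    (Eventually.of_forall fun t _ x _ => hdiff t x)
  exact key

lemma parSmooth : ∀ (n : ℕ) {d : ℕ} {W : Type} [NormedAddCommGroup W] [NormedSpace ℝ W]
    [CompleteSpace W] (k : ℕ) (g : (Fin d → ℝ) → W), ContDiff ℝ (⊤:ℕ∞) g → HasCompactSupport g →
    ContDiff ℝ n (paux g k) := by
  intro n
  induction n with
  | zero =>
    intro d W _ _ _ k g hg hgc
    rw [show ((0:ℕ) : WithTop ℕ∞) = 0 from rfl, contDiff_zero, continuous_iff_continuousAt]
    exact fun y => (parDeriv k g hg hgc y).continuousAt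
  | succ n ih =>
    intro d W _ _ _ k g hg hgc
    have hd : Differentiable ℝ (paux g k) := fun y => (parDeriv k g hg hgc y).differentiableAt
    have hfd : fderiv ℝ (paux g k) = paux (fderiv ℝ g) (k+1) := by
      funext y
      exact (parDeriv k g hg hgc y).fderiv
    rw [show ((n+1 : ℕ) : WithTop ℕ∞) = (n : WithTop ℕ∞) + 1 by exact_mod_cast rfl,
      contDiff_succ_iff_fderiv]
    refine ⟨hd, by simp, ?_⟩
    rw [hfd]
    exact ih (k+1) (fderiv ℝ g) (hg.fderiv_right (by exact_mod_cast le_top)) (hgc.fderiv ℝ)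

lemma parSmoothTop {d : ℕ} {W : Type} [NormedAddCommGroup W] [NormedSpace ℝ W]
    [CompleteSpace W] (k : ℕ) (g : (Fin d → ℝ) → W) (hg : ContDiff ℝ (⊤:ℕ∞) g)
    (hgc : HasCompactSupport g) : ContDiff ℝ (⊤:ℕ∞) (paux g k) := by
  rw [contDiff_infty]
  exact fun n => parSmooth n k g hg hgc

lemma parZero {d : ℕ} {W : Type} [NormedAddCommGroup W] [NormedSpace ℝ W]
    [CompleteSpace W] (k : ℕ) (g : (Fin d → ℝ) → W) :
    paux g k 0 = ((k+1 : ℝ))⁻¹ • g 0 := by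
  have : ∀ t : ℝ, t ^ k • g (t • (0 : Fin d → ℝ)) = t ^ k • g 0 := by intro t; rw [smul_zero]
  rw [paux]
  simp_rw [this]
  rw [intervalIntegral.integral_smul_const, integral_pow]
  norm_num

lemma single_eq_smul {d : ℕ} (y : Fin d → ℝ) (k : Fin d) :
    Pi.single k (y k) = y k • (Pi.single k 1 : Fin d → ℝ) := by
  funext j
  by_cases h : j = k <;> simp [Pi.single_apply, h]

lemma clm_expand {d : ℕ} (L : (Fin d → ℝ) →L[ℝ] ℝ) (y : Fin d → ℝ) :
    L y = ∑ k, y k * L (Pi.single k 1) := by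
  conv_lhs => rw [← Finset.univ_sum_single y]
  rw [map_sum]
  refine Finset.sum_congr rfl fun k _ => ?_
  rw [single_eq_smul, _root_.map_smul, smul_eq_mul]

lemma hadamard {d : ℕ} (g : (Fin d → ℝ) → ℝ) (hg : ContDiff ℝ (⊤:ℕ∞) g)
    (y : Fin d → ℝ) :
    g y = g 0 + ∑ k, y k * paux (fun z => fderiv ℝ g z (Pi.single k 1)) 0 y := by
  have h1le : ((⊤:ℕ∞) : WithTop ℕ∞) ≠ 0 := by simp
  have hdiffg : Differentiable ℝ g := hg.differentiable h1le
  have hfc : Continuous (fderiv ℝ g) := hg.continuous_fderiv h1le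
  have hderiv : ∀ t ∈ Set.uIcc (0:ℝ) 1, HasDerivAt (fun t : ℝ => g (t • y))
      (fderiv ℝ g (t • y) y) t := by
    intro t _
    have h1 : HasDerivAt (fun s : ℝ => s • y) y t := by
      simpa using (hasDerivAt_id t).smul_const y
    exact (hdiffg (t • y)).hasFDerivAt.comp_hasDerivAt t h1
  have hint : IntervalIntegrable (fun t => fderiv ℝ g (t • y) y) volume 0 1 :=
    ((ContinuousLinearMap.apply ℝ ℝ y).continuous.comp
      (hfc.comp (continuous_id.smul continuous_const))).intervalIntegrable _ _
  have hFTC := intervalIntegral.integral_eq_sub_of_hasDerivAt hderiv hint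
  simp only [one_smul, zero_smul] at hFTC
  have hexp : ∀ t : ℝ, fderiv ℝ g (t • y) y
      = ∑ k, y k * fderiv ℝ g (t • y) (Pi.single k 1) := fun t => clm_expand _ y
  rw [show (∑ k, y k * paux (fun z => fderiv ℝ g z (Pi.single k 1)) 0 y)
      = ∫ t in (0:ℝ)..1, fderiv ℝ g (t • y) y from ?_, hFTC]
  · ring
  · simp_rw [hexp]
    rw [intervalIntegral.integral_finset_sum]
    · refine Finset.sum_congr rfl fun k _ => ?_
      rw [paux]
      simp_rw [pow_zero, one_smul]
      rw [← intervalIntegral.integral_const_mul]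
    · intro k _
      exact (continuous_const.mul ((ContinuousLinearMap.apply ℝ ℝ (Pi.single k 1)).continuous.comp
        (hfc.comp (continuous_id.smul continuous_const)))).intervalIntegrable _ _

lemma secondDerivTest {d : ℕ} (g : (Fin d → ℝ) → ℝ) (hg : ContDiff ℝ (⊤:ℕ∞) g)
    (hmax : ∀ y, g y ≤ g 0) (v : Fin d → ℝ) :
    fderiv ℝ (fderiv ℝ g) 0 v v ≤ 0 := by
  have h1le : ((⊤:ℕ∞) : WithTop ℕ∞) ≠ 0 := by simp
  have hdiffg : Differentiable ℝ g := hg.differentiable h1le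
  have hdiffg' : Differentiable ℝ (fderiv ℝ g) :=
    (hg.fderiv_right (m := ((⊤:ℕ∞) : WithTop ℕ∞)) (by exact_mod_cast le_top)).differentiable h1le
  by_contra hcon
  push_neg at hcon
  have hf0 : fderiv ℝ g 0 = 0 := IsLocalMax.fderiv_eq_zero (Eventually.of_forall hmax)
  set ρ : ℝ → ℝ := fun t => fderiv ℝ g (t • v) v with hρdef
  have hρ0 : ρ 0 = 0 := by simp [hρdef, zero_smul, hf0]
  have hρd : HasDerivAt ρ (fderiv ℝ (fderiv ℝ g) 0 v v) 0 := by
    have h1 : HasDerivAt (fun t : ℝ => t • v) v 0 := by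
      simpa using (hasDerivAt_id (0:ℝ)).smul_const v
    have h2 : HasFDerivAt (fderiv ℝ g) (fderiv ℝ (fderiv ℝ g) 0) ((0:ℝ) • v) := by
      rw [zero_smul]; exact (hdiffg' 0).hasFDerivAt
    have h3 : HasDerivAt (fun t : ℝ => fderiv ℝ g (t • v)) (fderiv ℝ (fderiv ℝ g) 0 v) 0 :=
      h2.comp_hasDerivAt 0 h1
    have h4 := h3.clm_apply (hasDerivAt_const 0 v)
    simpa [zero_smul, hf0] using h4
  have hφd : ∀ t : ℝ, HasDerivAt (fun t : ℝ => g (t • v)) (ρ t) t := by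
    intro t
    have h1 : HasDerivAt (fun s : ℝ => s • v) v t := by
      simpa using (hasDerivAt_id t).smul_const v
    exact (hdiffg (t • v)).hasFDerivAt.comp_hasDerivAt t h1
  have hslope := hasDerivAt_iff_tendsto_slope.1 hρd
  have hev : ∀ᶠ t in 𝓝[≠] (0:ℝ), 0 < slope ρ 0 t := hslope.eventually (eventually_gt_nhds hcon)
  have hev' : ∀ᶠ t in 𝓝[>] (0:ℝ), 0 < slope ρ 0 t :=
    hev.filter_mono (nhdsWithin_mono 0 fun t ht => ne_of_gt ht)
  rw [eventually_nhdsWithin_iff] at hev'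
  obtain ⟨ε, hε0, hε⟩ := Metric.eventually_nhds_iff.1 hev'
  have hρpos : ∀ t : ℝ, 0 < t → t < ε → 0 < ρ t := by
    intro t ht0 htε
    have hd : dist t 0 < ε := by rw [Real.dist_eq, sub_zero, abs_of_pos ht0]; exact htε
    have hs := hε hd ht0
    have hsl : slope ρ 0 t = ρ t / t := by
      rw [slope_def_field, hρ0, sub_zero, sub_zero]
    rw [hsl] at hs
    rcases div_pos_iff.mp hs with ⟨h, _⟩ | ⟨_, h⟩
    · exact h
    · linarith
  have hmono : StrictMonoOn (fun t : ℝ => g (t • v)) (Set.Icc 0 (ε/2)) := by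
    apply strictMonoOn_of_deriv_pos (convex_Icc 0 (ε/2))
    · exact (hg.continuous.comp (continuous_id.smul continuous_const)).continuousOn
    · intro t ht
      rw [interior_Icc] at ht
      rw [(hφd t).deriv]
      exact hρpos t ht.1 (by linarith [ht.2])
  have hc2 : g ((0:ℝ) • v) < g ((ε/2) • v) :=
    hmono ⟨le_rfl, by positivity⟩ ⟨by positivity, le_rfl⟩ (by positivity)
  rw [zero_smul] at hc2
  linarith [hmax ((ε/2) • v)]

/-- Derivations annihilate constants. -/
lemma derivation_one (D : LeftInvariantDerivation I G) : D (1 : C^(⊤:ℕ∞)⟮I, G; ℝ⟯) = 0 := by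
  have h := LeftInvariantDerivation.leibniz D (1 : C^(⊤:ℕ∞)⟮I, G; ℝ⟯)
    (f' := (1 : C^(⊤:ℕ∞)⟮I, G; ℝ⟯))
  rw [mul_one, one_smul] at h
  exact (right_eq_add.mp h)

/-- Derivations are local: if `h` vanishes on an open neighbourhood of `p`, then `D h p = 0`. -/
lemma deriv_local (D : LeftInvariantDerivation I G) (h : C^(⊤:ℕ∞)⟮I, G; ℝ⟯) {N : Set G}
    (hN : IsOpen N) {p : G} (hp : p ∈ N) (hzero : ∀ g ∈ N, h g = 0) : D h p = 0 := by
  obtain ⟨χ, hχ0, hχ1, -⟩ := exists_contMDiffMap_zero_one_of_isClosed I (n := ⊤) hN.isClosed_compl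
    isClosed_singleton (Set.disjoint_singleton_right.mpr fun hpc => hpc hp)
  have hmul : χ * h = 0 := by
    apply DFunLike.ext
    intro g
    by_cases hg : g ∈ N
    · rw [ContMDiffMap.coe_mul]
      simp [hzero g hg]
    · have hg0 : χ g = 0 := hχ0 hg
      rw [ContMDiffMap.coe_mul]
      simp [hg0]
  have hL := LeftInvariantDerivation.leibniz D χ (f' := h)
  rw [hmul, map_zero] at hL
  have hLp := congrFun (congrArg (fun (ψ : C^(⊤:ℕ∞)⟮I, G; ℝ⟯) => (ψ : G → ℝ)) hL.symm) p
  have hχp : χ p = 1 := hχ1 rfl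
  have hhp : h p = 0 := hzero p hp
  simp only [smul_eq_mul] at hLp
  rw [ContMDiffMap.coe_add, Pi.add_apply, ContMDiffMap.coe_mul, ContMDiffMap.coe_mul, Pi.mul_apply,
    Pi.mul_apply, hχp, hhp] at hLp
  simpa using hLp


set_option linter.unusedSectionVars false

/-- Evaluation of a derivation at the identity via canonical coordinates. -/
lemma deriv_eval {d : ℕ} (x : Fin d → C^(⊤:ℕ∞)⟮I, G; ℝ⟯) (hx1 : ∀ i, x i 1 = 0)
    (D : LeftInvariantDerivation I G) (u : C^(⊤:ℕ∞)⟮I, G; ℝ⟯) (w : (Fin d → ℝ) → ℝ)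
    (hw : ContDiff ℝ (⊤:ℕ∞) w)
    (hrep : ∀ᶠ g in 𝓝 (1:G), u g = w (fun i => x i g)) :
    D u 1 = ∑ k, fderiv ℝ w 0 (Pi.single k 1) * D (x k) 1 := by
  classical
  set xt : G → (Fin d → ℝ) := fun g i => x i g with hxtdef
  have hxt : ContMDiff I 𝓘(ℝ, Fin d → ℝ) (⊤ : ℕ∞) xt := contMDiff_pi_space.mpr fun i => (x i).contMDiff
  have hxt1 : xt 1 = 0 := funext fun i => hx1 i
  -- cut off `w` to make it compactly supported
  set β : ContDiffBump (0 : Fin d → ℝ) := ⟨1, 2, one_pos, one_lt_two⟩ with hβdef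
  set w2 : (Fin d → ℝ) → ℝ := fun y => β y * w y with hw2def
  have hw2 : ContDiff ℝ (⊤:ℕ∞) w2 := β.contDiff.mul hw
  have hw2c : HasCompactSupport w2 := by
    apply HasCompactSupport.intro (isCompact_closedBall (0 : Fin d → ℝ) 2)
    intro y hy
    have hb : β y = 0 := by
      have hy2 : y ∉ Metric.ball (0 : Fin d → ℝ) 2 := fun hmem => hy (Metric.ball_subset_closedBall hmem)
      have := β.support_eq
      rw [← Function.notMem_support, this]
      exact hy2
    simp [hw2def, hb]
  have hsame : ∀ᶠ y in 𝓝 (0 : Fin d → ℝ), w2 y = w y := by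
    filter_upwards [Metric.closedBall_mem_nhds (0 : Fin d → ℝ) one_pos] with y hy
    have : β y = 1 := β.one_of_mem_closedBall hy
    simp [hw2def, this]
  have hfd : fderiv ℝ w2 0 = fderiv ℝ w 0 := Filter.EventuallyEq.fderiv_eq hsame
  have hrep2 : ∀ᶠ g in 𝓝 (1:G), u g = w2 (xt g) := by
    have hcont : Filter.Tendsto xt (𝓝 1) (𝓝 (0 : Fin d → ℝ)) := by
      have := hxt.continuous.continuousAt (x := (1:G))
      rwa [ContinuousAt, hxt1] at this
    filter_upwards [hrep, hcont.eventually hsame] with g h1 h2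
    rw [h2]
    exact h1
  -- Hadamard decomposition of w2
  set gk : Fin d → (Fin d → ℝ) → ℝ := fun k z => fderiv ℝ w2 z (Pi.single k 1) with hgkdef
  have hgk : ∀ k, ContDiff ℝ (⊤:ℕ∞) (gk k) := fun k =>
    (hw2.fderiv_right (by exact_mod_cast le_top)).clm_apply contDiff_const
  have hgkc : ∀ k, HasCompactSupport (gk k) := fun k =>
    (hw2c.fderiv ℝ).comp_left (g := fun L : (Fin d → ℝ) →L[ℝ] ℝ => L (Pi.single k 1)) rfl
  set Wk : Fin d → (Fin d → ℝ) → ℝ := fun k => paux (gk k) 0 with hWkdef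
  have hWk : ∀ k, ContDiff ℝ (⊤:ℕ∞) (Wk k) := fun k => parSmoothTop 0 _ (hgk k) (hgkc k)
  set uk : Fin d → C^(⊤:ℕ∞)⟮I, G; ℝ⟯ := fun k =>
    ⟨fun g => Wk k (xt g), (contMDiff_iff_contDiff.mpr (hWk k)).comp hxt⟩ with hukdef
  set hfun : C^(⊤:ℕ∞)⟮I, G; ℝ⟯ := u - (w2 0) • 1 - ∑ k, x k * uk k with hfundef
  obtain ⟨N, hNprop, hNopen, hN1⟩ := eventually_nhds_iff.1 hrep2
  have hsumeval : ∀ (F : Fin d → C^(⊤:ℕ∞)⟮I, G; ℝ⟯) (g : G), (∑ k, F k) g = ∑ k, F k g :=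
    fun F g => map_sum (ContMDiffMap.evalRingHom g) F Finset.univ
  have hzero : ∀ g ∈ N, hfun g = 0 := by
    intro g hg
    have hu : u g = w2 (xt g) := hNprop g hg
    have hh := hadamard w2 hw2 (xt g)
    rw [hfundef]
    rw [ContMDiffMap.coe_sub, Pi.sub_apply, ContMDiffMap.coe_sub, Pi.sub_apply, hsumeval]
    have huk : ∀ k, (x k * uk k) g = xt g k * Wk k (xt g) := by
      intro k
      rw [ContMDiffMap.coe_mul, Pi.mul_apply]
      rfl
    simp_rw [huk]
    rw [hu, ContMDiffMap.coe_smul, Pi.smul_apply, ContMDiffMap.coe_one, Pi.one_apply, smul_eq_mul,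
      mul_one]
    rw [hh]
    simp [hWkdef, hgkdef]
  have hD0 : D hfun 1 = 0 := deriv_local D hfun hNopen hN1 hzero
  have hexp : D hfun = D u - (w2 0) • D 1 - ∑ k, D (x k * uk k) := by
    rw [hfundef, map_sub, map_sub, _root_.map_smul, map_sum]
  have huk1 : ∀ k, uk k 1 = fderiv ℝ w 0 (Pi.single k 1) := by
    intro k
    have : uk k 1 = Wk k 0 := by rw [hukdef]; simp only [ContMDiffMap.coeFn_mk]; rw [hxt1]
    rw [this]
    show paux (gk k) 0 0 = _
    rw [parZero]
    simp [hgkdef, hfd]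
  have hterm : ∀ k, (D (x k * uk k)) 1 = fderiv ℝ w 0 (Pi.single k 1) * D (x k) 1 := by
    intro k
    rw [LeftInvariantDerivation.leibniz]
    rw [ContMDiffMap.coe_add, Pi.add_apply]
    simp only [smul_eq_mul]
    rw [ContMDiffMap.coe_mul, ContMDiffMap.coe_mul, Pi.mul_apply, Pi.mul_apply, hx1 k, huk1 k]
    ring
  have h1 := DFunLike.congr_fun hexp (1 : G)
  rw [hD0, derivation_one, smul_zero, sub_zero] at h1
  rw [ContMDiffMap.coe_sub, Pi.sub_apply, hsumeval] at h1
  simp_rw [hterm] at h1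
  linarith [h1]

/-- Leibniz rule, pointwise. -/
lemma deriv_prod_apply (D : LeftInvariantDerivation I G) (p q : C^(⊤:ℕ∞)⟮I, G; ℝ⟯) (g : G) :
    D (p * q) g = p g * D q g + q g * D p g := by
  rw [LeftInvariantDerivation.leibniz, ContMDiffMap.coe_add, Pi.add_apply]
  simp only [smul_eq_mul]
  rw [ContMDiffMap.coe_mul, ContMDiffMap.coe_mul, Pi.mul_apply, Pi.mul_apply]

/-- Every linear functional on `C_c^∞(G)` of Lévy–Khintchine form
satisfies the positive maximum principle. -/
theorem levy_khintchine_form_satisfies_pmp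
    {d : ℕ} (X : Module.Basis (Fin d) ℝ (LeftInvariantDerivation I G))
    (U : Set G) (x : Fin d → C^(⊤ : ℕ∞)⟮I, G; ℝ⟯) (hcoords : IsCanonicalCoords (fun i => X i) U x)
    (c : ℝ) (b : Fin d → ℝ) (a : Matrix (Fin d) (Fin d) ℝ) (μ : Measure G)
    (hc : 0 ≤ c) (ha : a.IsSymm) (hpsd : ∀ ξ : Fin d → ℝ, 0 ≤ ξ ⬝ᵥ a.mulVec ξ)
    (hμ : IsLevyMeasure U x μ)
    (T : C^(⊤ : ℕ∞)⟮I, G; ℝ⟯ → ℝ)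
    (hint : ∀ φ : C^(⊤ : ℕ∞)⟮I, G; ℝ⟯, HasCompactSupport (φ : G → ℝ) →
      Integrable (fun g => φ g - φ 1 - ∑ i, x i g * X i φ 1) μ)
    (hT : ∀ φ : C^(⊤ : ℕ∞)⟮I, G; ℝ⟯, HasCompactSupport (φ : G → ℝ) →
      T φ = (∑ i, ∑ j, a i j * X i (X j φ) 1) + (∑ i, b i * X i φ 1) - c * φ 1 +
        ∫ g, (φ g - φ 1 - ∑ i, x i g * X i φ 1) ∂μ) :
    PMPfunctional T := by
  classical
  intro f hfc hmax hM
  obtain ⟨ψ, hψ, hψx⟩ := hcoords.smooth_inv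
  set M := f 1 with hMdef
  set xt : G → (Fin d → ℝ) := fun g i => x i g with hxtdef
  have hxtsm : ContMDiff I 𝓘(ℝ, Fin d → ℝ) (⊤ : ℕ∞) xt := contMDiff_pi_space.mpr fun i => (x i).contMDiff
  have hxt1 : xt 1 = 0 := funext fun i => hcoords.coord_one i
  set Ω : Set (Fin d → ℝ) := (fun g (i : Fin d) => x i g) '' U with hΩdef
  have hΩopen : IsOpen Ω := hcoords.isOpen_image
  have h0Ω : (0 : Fin d → ℝ) ∈ Ω := ⟨1, hcoords.one_mem, hxt1⟩
  have hψ1 : ψ (0 : Fin d → ℝ) = 1 := by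
    rw [← hxt1]
    exact hψx 1 hcoords.one_mem
  have hF : ContDiffOn ℝ (⊤:ℕ∞) (fun y => f (ψ y)) Ω := by
    rw [← contMDiffOn_iff_contDiffOn]
    exact f.contMDiff.comp_contMDiffOn hψ
  obtain ⟨r, hr0, hrΩ⟩ : ∃ r > 0, Metric.closedBall (0 : Fin d → ℝ) r ⊆ Ω := by
    obtain ⟨ε, hε0, hball⟩ := Metric.isOpen_iff.1 hΩopen 0 h0Ω
    exact ⟨ε/2, by positivity, (Metric.closedBall_subset_ball (by linarith)).trans hball⟩
  set β : ContDiffBump (0 : Fin d → ℝ) := ⟨r/2, r, by positivity, by linarith⟩ with hβdef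
  set Fb : (Fin d → ℝ) → ℝ := fun y => if y ∈ Ω then β y * (f (ψ y) - M) else 0 with hFbdef
  have hFb0 : Fb 0 = 0 := by
    rw [hFbdef]
    simp only [if_pos h0Ω]
    rw [hψ1, sub_self, mul_zero]
  have hFbmax : ∀ y, Fb y ≤ 0 := by
    intro y
    rw [hFbdef]
    simp only
    split
    · exact mul_nonpos_of_nonneg_of_nonpos β.nonneg (sub_nonpos.2 (hmax _))
    · exact le_refl 0
  have hFbmax' : ∀ y, Fb y ≤ Fb 0 := fun y => (hFbmax y).trans_eq hFb0.symm
  have hFbzero : ∀ y ∉ Metric.closedBall (0 : Fin d → ℝ) r, Fb y = 0 := by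
    intro z hz
    rw [hFbdef]
    simp only
    split
    · have hβz : β z = 0 := by
        have hz2 : z ∉ Metric.ball (0 : Fin d → ℝ) r := fun hmem => hz (Metric.ball_subset_closedBall hmem)
        rw [← Function.notMem_support, β.support_eq]
        exact hz2
      rw [hβz, zero_mul]
    · rfl
  have hFbsm : ContDiff ℝ (⊤:ℕ∞) Fb := by
    rw [contDiff_iff_contDiffAt]
    intro y
    by_cases hy : y ∈ Ω
    · have hc : ContDiffAt ℝ (⊤:ℕ∞) (fun y => β y * (f (ψ y) - M)) y :=
        β.contDiff.contDiffAt.mul ((hF.contDiffAt (hΩopen.mem_nhds hy)).sub contDiffAt_const)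
      apply hc.congr_of_eventuallyEq
      filter_upwards [hΩopen.mem_nhds hy] with z hz
      rw [hFbdef]
      simp only [if_pos hz]
    · have hyc : y ∈ (Metric.closedBall (0 : Fin d → ℝ) r)ᶜ := fun hmem => hy (hrΩ hmem)
      apply (contDiffAt_const (c := (0:ℝ))).congr_of_eventuallyEq
      filter_upwards [Metric.isClosed_closedBall.isOpen_compl.mem_nhds hyc] with z hz
      exact hFbzero z hz
  have hFbc : HasCompactSupport Fb :=
    HasCompactSupport.intro (isCompact_closedBall (0 : Fin d → ℝ) r) hFbzero
  -- the germ identity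
  set N : Set G := U ∩ xt ⁻¹' (Metric.ball (0 : Fin d → ℝ) (r/2)) with hNdef
  have hNopen : IsOpen N :=
    hcoords.isOpen.inter (Metric.isOpen_ball.preimage hxtsm.continuous)
  have hN1 : (1:G) ∈ N := by
    refine ⟨hcoords.one_mem, ?_⟩
    rw [Set.mem_preimage, hxt1]
    exact Metric.mem_ball_self (by positivity)
  have hgerm : ∀ g ∈ N, f g = M + Fb (xt g) := by
    rintro g ⟨hgU, hgball⟩
    have hxtΩ : xt g ∈ Ω := ⟨g, hgU, rfl⟩
    have hβ1 : β (xt g) = 1 := by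
      apply β.one_of_mem_closedBall
      exact Metric.ball_subset_closedBall (Set.mem_preimage.1 hgball)
    rw [hFbdef]
    simp only [if_pos hxtΩ]
    have hψg : ψ (xt g) = g := hψx g hgU
    rw [hβ1, one_mul, hψg]
    ring
  -- first and second derivatives of Fb at 0
  have h1le : ((⊤:ℕ∞) : WithTop ℕ∞) ≠ 0 := by simp
  have hdFb : Differentiable ℝ Fb := hFbsm.differentiable h1le
  have hdFb' : Differentiable ℝ (fderiv ℝ Fb) :=
    (hFbsm.fderiv_right (m := ((⊤:ℕ∞) : WithTop ℕ∞)) (by exact_mod_cast le_top)).differentiable h1le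
  have hf'0 : fderiv ℝ Fb 0 = 0 := IsLocalMax.fderiv_eq_zero (Filter.Eventually.of_forall hFbmax')
  set f2 : (Fin d → ℝ) →L[ℝ] (Fin d → ℝ) →L[ℝ] ℝ := fderiv ℝ (fderiv ℝ Fb) 0 with hf2def
  have hsym : ∀ v w, f2 v w = f2 w v :=
    second_derivative_symmetric (fun y => (hdFb y).hasFDerivAt) (hdFb' 0).hasFDerivAt
  have hNSD : ∀ v, f2 v v ≤ 0 := fun v => secondDerivTest Fb hFbsm hFbmax' v
  have hd1 : ∀ i j, X j (x i) 1 = if i = j then (1:ℝ) else 0 := hcoords.deriv_one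
  -- first-order vanishing
  have hgermev : ∀ᶠ g in 𝓝 (1:G), f g = (fun y => M + Fb y) (fun i => x i g) :=
    eventually_nhds_iff.2 ⟨N, hgerm, hNopen, hN1⟩
  have hXf : ∀ (D : LeftInvariantDerivation I G), D f 1 = 0 := by
    intro D
    rw [deriv_eval x hcoords.coord_one D f (fun y => M + Fb y) (contDiff_const.add hFbsm) hgermev]
    have hfd : fderiv ℝ (fun y => M + Fb y) 0 = fderiv ℝ Fb 0 := fderiv_const_add M
    rw [hfd, hf'0]
    simp
  -- second-order machinery
  set gk : Fin d → (Fin d → ℝ) → ℝ := fun k z => fderiv ℝ Fb z (Pi.single k 1) with hgkdef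
  have hgk : ∀ k, ContDiff ℝ (⊤:ℕ∞) (gk k) := fun k =>
    (hFbsm.fderiv_right (by exact_mod_cast le_top)).clm_apply contDiff_const
  have hgkc : ∀ k, HasCompactSupport (gk k) := fun k =>
    (hFbc.fderiv ℝ).comp_left (g := fun L : (Fin d → ℝ) →L[ℝ] ℝ => L (Pi.single k 1)) rfl
  set Wk : Fin d → (Fin d → ℝ) → ℝ := fun k => paux (gk k) 0 with hWkdef
  have hWksm : ∀ k, ContDiff ℝ (⊤:ℕ∞) (Wk k) := fun k => parSmoothTop 0 _ (hgk k) (hgkc k)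
  set uk : Fin d → C^(⊤:ℕ∞)⟮I, G; ℝ⟯ := fun k =>
    ⟨fun g => Wk k (xt g), (contMDiff_iff_contDiff.mpr (hWksm k)).comp hxtsm⟩ with hukdef
  have hWk0 : ∀ k, Wk k 0 = 0 := by
    intro k
    show paux (gk k) 0 0 = 0
    rw [parZero]
    simp [hgkdef, hf'0]
  have huk1 : ∀ k, uk k 1 = 0 := by
    intro k
    show Wk k (xt 1) = 0
    rw [hxt1, hWk0]
  have hWkd : ∀ k m, fderiv ℝ (Wk k) 0 (Pi.single m 1)
      = 2⁻¹ * f2 (Pi.single m 1) (Pi.single k 1) := by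
    intro k m
    have hd := (parDeriv 0 (gk k) (hgk k) (hgkc k) 0).fderiv
    show fderiv ℝ (paux (gk k) 0) 0 (Pi.single m 1) = _
    rw [hd, parZero]
    have hgkeq : gk k = ⇑(ContinuousLinearMap.apply ℝ ℝ (Pi.single k 1)) ∘ (fderiv ℝ Fb) := rfl
    have hA : HasFDerivAt (⇑(ContinuousLinearMap.apply ℝ ℝ (Pi.single k 1)) ∘ (fderiv ℝ Fb))
        ((ContinuousLinearMap.apply ℝ ℝ (Pi.single k 1)).comp (fderiv ℝ (fderiv ℝ Fb) 0)) 0 :=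
      (ContinuousLinearMap.apply ℝ ℝ (Pi.single k 1)).hasFDerivAt.comp 0 (hdFb' 0).hasFDerivAt
    rw [hgkeq, hA.fderiv]
    rw [ContinuousLinearMap.smul_apply, ContinuousLinearMap.comp_apply,
      ContinuousLinearMap.apply_apply, smul_eq_mul]
    norm_num
    rfl
  have hDuk : ∀ (D : LeftInvariantDerivation I G) k,
      D (uk k) 1 = ∑ m, fderiv ℝ (Wk k) 0 (Pi.single m 1) * D (x m) 1 := fun D k =>
    deriv_eval x hcoords.coord_one D (uk k) (Wk k) (hWksm k) (Filter.Eventually.of_forall fun g => rfl)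
  have hXuk : ∀ j k, X j (uk k) 1 = 2⁻¹ * f2 (Pi.single j 1) (Pi.single k 1) := by
    intro j k
    rw [hDuk (X j) k]
    have hterms : ∀ m, fderiv ℝ (Wk k) 0 (Pi.single m 1) * X j (x m) 1
        = if m = j then 2⁻¹ * f2 (Pi.single j 1) (Pi.single k 1) else 0 := by
      intro m
      rw [hd1 m j]
      by_cases h : m = j
      · subst h
        rw [if_pos rfl, if_pos rfl, mul_one, hWkd]
      · rw [if_neg h, if_neg h, mul_zero]
    simp_rw [hterms]
    simp
  -- the decomposition of f near 1
  set hh : C^(⊤:ℕ∞)⟮I, G; ℝ⟯ := f - M • 1 - ∑ k, x k * uk k with hhdef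
  have hsumeval : ∀ (F : Fin d → C^(⊤:ℕ∞)⟮I, G; ℝ⟯) (g : G), (∑ k, F k) g = ∑ k, F k g :=
    fun F g => map_sum (ContMDiffMap.evalRingHom g) F Finset.univ
  have hhzero : ∀ g ∈ N, hh g = 0 := by
    intro g hg
    rw [hhdef, ContMDiffMap.coe_sub, Pi.sub_apply, ContMDiffMap.coe_sub, Pi.sub_apply, hsumeval]
    have hukg : ∀ k, (x k * uk k) g = xt g k * Wk k (xt g) := by
      intro k
      rw [ContMDiffMap.coe_mul, Pi.mul_apply]
      rfl
    simp_rw [hukg]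
    rw [ContMDiffMap.coe_smul, Pi.smul_apply, ContMDiffMap.coe_one, Pi.one_apply, smul_eq_mul, mul_one]
    have hhad : Fb (xt g) = Fb 0 + ∑ k, xt g k * Wk k (xt g) := hadamard Fb hFbsm (xt g)
    rw [hgerm g hg, hhad, hFb0]
    ring
  have hfeq : f = hh + (M • 1 + ∑ k, x k * uk k) := by
    rw [hhdef, sub_sub]
    abel
  -- second-order identity
  have hXXf : ∀ i j : Fin d, X i (X j f) 1 = f2 (Pi.single i 1) (Pi.single j 1) := by
    intro i j
    have hXj : X j f = X j hh + ∑ k, X j (x k * uk k) := by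
      rw [hfeq, map_add, map_add, _root_.map_smul, derivation_one, smul_zero, zero_add, map_sum]
    rw [hXj, map_add, map_sum, ContMDiffMap.coe_add, Pi.add_apply, hsumeval]
    have hXjh0 : ∀ g ∈ N, (X j hh) g = 0 := fun g hg => deriv_local (X j) hh hNopen hg hhzero
    have h0 : X i (X j hh) 1 = 0 := deriv_local (X i) (X j hh) hNopen hN1 hXjh0
    rw [h0, zero_add]
    have hterm2 : ∀ k, (X i (X j (x k * uk k))) 1
        = (if k = i then (1:ℝ) else 0) * (X j (uk k)) 1
          + (if k = j then (1:ℝ) else 0) * (X i (uk k)) 1 := by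
      intro k
      have hin : X j (x k * uk k) = x k * X j (uk k) + uk k * X j (x k) := by
        rw [LeftInvariantDerivation.leibniz, smul_eq_mul, smul_eq_mul]
      rw [hin, map_add, ContMDiffMap.coe_add, Pi.add_apply, deriv_prod_apply, deriv_prod_apply]
      rw [hcoords.coord_one k, huk1 k, hd1 k i, hd1 k j]
      ring
    simp_rw [hterm2]
    rw [Finset.sum_add_distrib]
    simp_rw [ite_mul, one_mul, zero_mul]
    rw [Finset.sum_ite_eq' Finset.univ i (fun k => (X j (uk k)) 1),
      Finset.sum_ite_eq' Finset.univ j (fun k => (X i (uk k)) 1)]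
    simp only [Finset.mem_univ, if_pos]
    rw [hXuk j i, hXuk i j]
    rw [hsym (Pi.single j 1) (Pi.single i 1)]
    ring
  -- quadratic form expansion
  have hv : ∀ v : Fin d → ℝ, v = ∑ i, v i • (Pi.single i 1 : Fin d → ℝ) := by
    intro v
    conv_lhs => rw [← Finset.univ_sum_single v]
    exact Finset.sum_congr rfl fun i _ => single_eq_smul v i
  have hexpand : ∀ v : Fin d → ℝ,
      f2 v v = ∑ i, ∑ j, v i * v j * f2 (Pi.single i 1) (Pi.single j 1) := by
    intro v
    conv_lhs => rw [hv v]
    have step1 : f2 (∑ i, v i • (Pi.single i 1 : Fin d → ℝ)) = ∑ i, v i • f2 (Pi.single i 1) := by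
      rw [map_sum]
      exact Finset.sum_congr rfl fun i _ => _root_.map_smul f2 (v i) _
    rw [step1, ContinuousLinearMap.sum_apply]
    simp only [ContinuousLinearMap.smul_apply, map_sum, _root_.map_smul, Finset.smul_sum,
      smul_eq_mul]
    refine Finset.sum_congr rfl fun i _ => Finset.sum_congr rfl fun j _ => by ring
  -- matrix decomposition
  have hherm : a.IsHermitian := by
    rw [Matrix.IsHermitian]
    ext i j
    rw [Matrix.conjTranspose_apply, star_trivial]
    exact ha.apply i j
  have hPSD : a.PosSemidef := Matrix.posSemidef_iff_dotProduct_mulVec.mpr ⟨hherm, fun ξ => by simpa using hpsd ξ⟩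
  obtain ⟨m, B, hB⟩ := Matrix.posSemidef_iff_eq_sum_vecMulVec.mp hPSD
  have haentry : ∀ i j, a i j = ∑ k, B k i * B k j := by
    intro i j
    rw [hB]
    simp [Matrix.sum_apply, Matrix.vecMulVec_apply]
  have hquad : ∑ i, ∑ j, a i j * f2 (Pi.single i 1) (Pi.single j 1) ≤ 0 := by
    have hswap : ∑ i, ∑ j, a i j * f2 (Pi.single i 1) (Pi.single j 1)
        = ∑ k, f2 (B k) (B k) := by
      simp_rw [haentry, Finset.sum_mul, hexpand]
      exact (Finset.sum_congr rfl fun i _ => Finset.sum_comm).trans Finset.sum_comm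
    rw [hswap]
    exact Finset.sum_nonpos fun k _ => hNSD (B k)
  -- assemble
  rw [hT f hfc]
  have h1 : ∑ i, ∑ j, a i j * X i (X j f) 1 ≤ 0 := by
    simp_rw [hXXf]
    exact hquad
  have h2 : ∑ i, b i * X i f 1 = 0 := by
    simp only [hXf]
    simp
  have h3 : ∫ g, (f g - f 1 - ∑ i, x i g * X i f 1) ∂μ ≤ 0 := by
    have heq : (fun g => f g - f 1 - ∑ i, x i g * X i f 1) = fun g => f g - f 1 := by
      funext g
      simp [hXf]
    rw [heq]
    exact integral_nonpos fun g => sub_nonpos.2 (hmax g)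
  have h4 : 0 ≤ c * f 1 := mul_nonneg hc hM
  linarith
end
end

section
/- Let A be a linear map from C_c^∞(G) to real-valued functions on G satisfying the positive maximum principle, with Courrège form with characteristics (a, b, c, μ), and suppose that μ(σ, Uᶜ) → 0 as σ → ∞, i.e. for every ε > 0 there is a compact set B ⊆ G with μ(σ, Uᶜ) < ε for all σ ∉ B. Then for every f ∈ C_c^∞(G) the function Af vanishes at infinity: for every ε > 0 there is a compact set B ⊆ G with |Af(σ)| < ε for all σ ∉ B. -/
open MeasureTheory Filter Topology Matrix
open scoped Manifold ENNReal ZeroAtInfty BoundedContinuousFunction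

noncomputable section

variable {E : Type} [NormedAddCommGroup E] [NormedSpace ℝ E] [FiniteDimensional ℝ E]
  {H : Type} [TopologicalSpace H] {I : ModelWithCorners ℝ E H}
  {G : Type} [TopologicalSpace G] [ChartedSpace H G] [Group G] [LieGroup I (⊤ : ℕ∞) G]
  [T2Space G] [LocallyCompactSpace G] [SecondCountableTopology G]
variable [MeasurableSpace G] [BorelSpace G]

/-- A linear operator from `C_c^∞(G)` to functions on `G` satisfies the positive maximum
principle. -/
def PMPoperator (A : C^(⊤ : ℕ∞)⟮I, G; ℝ⟯ → G → ℝ) : Prop :=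
  ∀ f : C^(⊤ : ℕ∞)⟮I, G; ℝ⟯, HasCompactSupport (f : G → ℝ) →
    ∀ ρ : G, (∀ τ : G, f τ ≤ f ρ) → 0 ≤ f ρ → A f ρ ≤ 0

/-- The operator `A` has Courrège form with characteristics `(a, b, c, ν)`: `c ≥ 0`,
`a(σ)` is symmetric nonnegative-definite, `ν` is a Lévy kernel, and for every
`f ∈ C_c^∞(G)` and `σ ∈ G`,
`Af(σ) = -c(σ)f(σ) + Σ bᵢ(σ)Xᵢf(σ) + Σ aⱼₖ(σ)XⱼXₖf(σ)
  + ∫ (f(στ) - f(σ) - Σ xᵢ(τ)Xᵢf(σ)) ν(σ, dτ)` (with the integrand `ν(σ)`-integrable). -/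
def HasCourregeForm [MeasurableSpace G] {d : ℕ}
    (X : Fin d → LeftInvariantDerivation I G) (U : Set G) (x : Fin d → C^(⊤ : ℕ∞)⟮I, G; ℝ⟯)
    (A : C^(⊤ : ℕ∞)⟮I, G; ℝ⟯ → G → ℝ) (a : G → Matrix (Fin d) (Fin d) ℝ)
    (b : Fin d → G → ℝ) (c : G → ℝ) (ν : G → Measure G) : Prop :=
  (∀ σ, 0 ≤ c σ) ∧ (∀ σ, (a σ).IsSymm) ∧
    (∀ σ, ∀ ξ : Fin d → ℝ, 0 ≤ ξ ⬝ᵥ (a σ).mulVec ξ) ∧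
    (∀ σ, IsLevyMeasure U x (ν σ)) ∧
    ∀ f : C^(⊤ : ℕ∞)⟮I, G; ℝ⟯, HasCompactSupport (f : G → ℝ) → ∀ σ : G,
      Integrable (fun τ => f (σ * τ) - f σ - ∑ i, x i τ * X i f σ) (ν σ) ∧
      A f σ = -(c σ * f σ) + (∑ i, b i σ * X i f σ) +
        (∑ j, ∑ k, a σ j k * X j (X k f) σ) +
        ∫ τ, (f (σ * τ) - f σ - ∑ i, x i τ * X i f σ) ∂(ν σ)

open scoped Pointwise

/-- If `A` satisfies the positive maximum principle, has Courrège form with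
Lévy kernel `ν`, and `ν(σ, Uᶜ) → 0` as `σ → ∞`, then `Af` vanishes at infinity for every
`f ∈ C_c^∞(G)`. -/
theorem courrege_operator_vanishes_at_infinity
    {d : ℕ} (X : Module.Basis (Fin d) ℝ (LeftInvariantDerivation I G))
    (U : Set G) (x : Fin d → C^(⊤ : ℕ∞)⟮I, G; ℝ⟯) (hcoords : IsCanonicalCoords (fun i => X i) U x)
    (A : C^(⊤ : ℕ∞)⟮I, G; ℝ⟯ → G → ℝ)
    (hlin : ∀ f g : C^(⊤ : ℕ∞)⟮I, G; ℝ⟯, HasCompactSupport (f : G → ℝ) →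
      HasCompactSupport (g : G → ℝ) → ∀ p q : ℝ, ∀ σ : G,
        A (p • f + q • g) σ = p * A f σ + q * A g σ)
    (hpmp : PMPoperator A)
    (a : G → Matrix (Fin d) (Fin d) ℝ) (b : Fin d → G → ℝ) (c : G → ℝ)
    (ν : G → Measure G)
    (hform : HasCourregeForm (fun i => X i) U x A a b c ν)
    (hvanish : ∀ ε : ℝ, 0 < ε → ∃ B : Set G, IsCompact B ∧
      ∀ σ ∉ B, ν σ Uᶜ < ENNReal.ofReal ε) :
    ∀ f : C^(⊤ : ℕ∞)⟮I, G; ℝ⟯, HasCompactSupport (f : G → ℝ) →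
      ∀ ε : ℝ, 0 < ε → ∃ B : Set G, IsCompact B ∧ ∀ σ ∉ B, |A f σ| < ε := by
  classical
  intro f hf ε hε
  haveI : IsTopologicalGroup G := topologicalGroup_of_lieGroup I (⊤ : ℕ∞)
  obtain ⟨hc, hsym, hpos, hlevy, hint⟩ := hform
  obtain ⟨C, hC0, hC⟩ : ∃ C, 0 ≤ C ∧ ∀ τ, |f τ| ≤ C := by
    obtain ⟨C, hC⟩ := hf.exists_bound_of_continuous f.contMDiff.continuous
    exact ⟨C, le_trans (norm_nonneg _) (hC 1), fun τ => hC τ⟩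
  set ε' := ε / (C + 1) with hε'def
  have hε' : 0 < ε' := div_pos hε (by linarith)
  obtain ⟨B₀, hB₀c, hB₀⟩ := hvanish ε' hε'
  -- first bump function
  obtain ⟨K₁, hK₁c, hK₁⟩ := exists_compact_superset hf
  obtain ⟨χ₁, hχ₁0, hχ₁1, -⟩ := exists_contMDiffMap_zero_one_of_isClosed I
    (isOpen_interior (s := K₁)).isClosed_compl (isClosed_tsupport (f : G → ℝ))
    (Set.disjoint_compl_left_iff_subset.mpr hK₁)
  have hχ₁supp : ∀ τ ∉ K₁, χ₁ τ = 0 := fun τ hτ =>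
    hχ₁0 (fun h => hτ (interior_subset h))
  have hf0 : ∀ τ ∉ K₁, f τ = 0 := fun τ hτ =>
    image_eq_zero_of_notMem_tsupport (fun h => hτ (interior_subset (hK₁ h)))
  have hfχ : f = χ₁ * f := by
    ext τ
    by_cases hτ : τ ∈ tsupport (f : G → ℝ)
    · simp [hχ₁1 hτ]
    · simp [image_eq_zero_of_notMem_tsupport hτ]
  have hXf : ∀ k : Fin d, ∀ σ ∉ K₁, X k f σ = 0 := by
    intro k σ hσ
    conv_lhs => rw [hfχ]
    rw [LeftInvariantDerivation.leibniz]
    simp [hχ₁supp σ hσ, hf0 σ hσ]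
  -- second bump function
  obtain ⟨K₂, hK₂c, hK₂⟩ := exists_compact_superset hK₁c
  have hK₁K₂ : K₁ ⊆ K₂ := hK₂.trans interior_subset
  obtain ⟨χ₂, hχ₂0, hχ₂1, -⟩ := exists_contMDiffMap_zero_one_of_isClosed I
    (isOpen_interior (s := K₂)).isClosed_compl hK₁c.isClosed
    (Set.disjoint_compl_left_iff_subset.mpr hK₂)
  have hχ₂supp : ∀ τ ∉ K₂, χ₂ τ = 0 := fun τ hτ =>
    hχ₂0 (fun h => hτ (interior_subset h))
  have hgχ : ∀ k : Fin d, X k f = χ₂ * X k f := by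
    intro k
    ext τ
    by_cases hτ : τ ∈ K₁
    · simp [hχ₂1 hτ]
    · simp [hXf k τ hτ]
  have hXXf : ∀ j k : Fin d, ∀ σ ∉ K₂, X j (X k f) σ = 0 := by
    intro j k σ hσ
    have hσ₁ : σ ∉ K₁ := fun h => hσ (hK₁K₂ h)
    conv_lhs => rw [hgχ k]
    rw [LeftInvariantDerivation.leibniz]
    simp [hχ₂supp σ hσ, hXf k σ hσ₁]
  -- the compact set
  refine ⟨(K₂ ∪ tsupport (f : G → ℝ) * (closure U)⁻¹) ∪ B₀,
    (hK₂c.union (hf.mul hcoords.isCompact_closure.inv)).union hB₀c, ?_⟩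
  intro σ hσ
  simp only [Set.mem_union, not_or] at hσ
  obtain ⟨⟨hσ₂, hσU⟩, hσB₀⟩ := hσ
  have hσ₁ : σ ∉ K₁ := fun h => hσ₂ (hK₁K₂ h)
  have hfσ : f σ = 0 := hf0 σ hσ₁
  have hXσ : ∀ i : Fin d, X i f σ = 0 := fun i => hXf i σ hσ₁
  have hXXσ : ∀ j k : Fin d, X j (X k f) σ = 0 := fun j k => hXXf j k σ hσ₂
  obtain ⟨hInt, hAf⟩ := hint f hf σ
  rw [hAf]
  simp only [hfσ, hXσ, hXXσ, mul_zero, Finset.sum_const_zero, sub_zero, neg_zero,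
    add_zero, zero_add]
  -- now goal : |∫ τ, f (σ * τ) ∂ν σ| < ε
  have hiU : ∀ τ ∈ U, f (σ * τ) = 0 := by
    intro τ hτ
    apply image_eq_zero_of_notMem_tsupport
    intro hmem
    exact hσU ⟨σ * τ, hmem, τ⁻¹, Set.inv_mem_inv.mpr (subset_closure hτ),
      mul_inv_cancel_right σ τ⟩
  rw [← setIntegral_eq_integral_of_forall_compl_eq_zero
    (s := Uᶜ) (fun τ hτ => hiU τ (Set.not_notMem.mp hτ))]
  have hmeas : AEStronglyMeasurable (fun τ => f (σ * τ)) ((ν σ).restrict Uᶜ) :=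
    (f.contMDiff.continuous.comp (continuous_mul_left σ)).aestronglyMeasurable
  have hfin : ν σ Uᶜ < ⊤ := (hlevy σ).2.2
  have hb := norm_setIntegral_le_of_norm_le_const (μ := ν σ) (s := Uᶜ) (f := fun τ => f (σ * τ)) (C := C) hfin
    (fun τ _ => by rw [Real.norm_eq_abs]; exact hC _)
  rw [Real.norm_eq_abs] at hb
  have ht : (ν σ Uᶜ).toReal < ε' := ENNReal.toReal_lt_of_lt_ofReal (hB₀ σ hσB₀)
  have ht0 : 0 ≤ (ν σ Uᶜ).toReal := ENNReal.toReal_nonneg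
  have hfinal : C * (ν σ Uᶜ).toReal < ε := by
    have : C * (ν σ Uᶜ).toReal ≤ C * ε' := by nlinarith
    have h2 : C * ε' < (C + 1) * ε' := by nlinarith
    have h3 : (C + 1) * ε' = ε := by
      rw [hε'def]; field_simp
    linarith
  exact lt_of_le_of_lt hb hfinal
end
end

section
/- (Symbol of an operator satisfying the positive maximum principle.) Let G be a compact Lie group, let π : G → M_n(ℂ) be a smooth homomorphism into the group of unitary n×n matrices, and let dπ : {X₁,…,X_d} → M_n(ℂ) satisfy Xπ(σ) = π(σ)·dπ(X) for every σ ∈ G and X ∈ {X₁,…,X_d} (X acting entrywise on the matrix coefficients of π, extended ℂ-linearly to complex-valued smooth functions). Let A have Courrège form with characteristics (a, b, c, μ), applied entrywise (and ℂ-linearly) to the matrix coefficients of π, and define j_A(σ, π) := π(σ)⁻¹ (Aπ)(σ). Then for every σ ∈ G: j_A(σ, π) = −c(σ)I_n + Σ_{i=1}^d bᵢ(σ)dπ(Xᵢ) + Σ_{j,k=1}^d a_{jk}(σ)dπ(Xⱼ)dπ(X_k) + ∫_G (π(τ) − I_n − Σ_{i=1}^d xᵢ(τ)dπ(Xᵢ))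 μ(σ, dτ), where the last term is a convergent matrix-valued (Bochner) integral and I_n is the n×n identity matrix. -/
open MeasureTheory Filter Topology Matrix
open scoped Manifold ENNReal ZeroAtInfty BoundedContinuousFunction

noncomputable section

variable {E : Type} [NormedAddCommGroup E] [NormedSpace ℝ E] [FiniteDimensional ℝ E]
  {H : Type} [TopologicalSpace H] {I : ModelWithCorners ℝ E H}
  {G : Type} [TopologicalSpace G] [ChartedSpace H G] [Group G] [LieGroup I (⊤ : ℕ∞) G]
  [T2Space G] [LocallyCompactSpace G] [SecondCountableTopology G]
variable [MeasurableSpace G] [BorelSpace G]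

section MatrixHelpers

attribute [local instance] Matrix.normedAddCommGroup Matrix.normedSpace

variable {α : Type*} [MeasurableSpace α] {μ : Measure α} {n : ℕ}

instance matrixCompleteSpace : CompleteSpace (Matrix (Fin n) (Fin n) ℂ) :=
  FiniteDimensional.complete ℝ _

abbrev matrixTop : TopologicalSpace (Matrix (Fin n) (Fin n) ℂ) :=
  (Matrix.normedAddCommGroup : NormedAddCommGroup (Matrix (Fin n) (Fin n) ℂ)).toUniformSpace.toTopologicalSpace

attribute [local instance] matrixTop

lemma matrix_integrable_iff {f : α → Matrix (Fin n) (Fin n) ℂ} :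
    Integrable f μ ↔ ∀ i j, Integrable (fun a => f a i j) μ := by
  constructor
  · intro h i j
    let L : Matrix (Fin n) (Fin n) ℂ →L[ℝ] ℂ :=
      (ContinuousLinearMap.proj j).comp
        (ContinuousLinearMap.proj (R := ℝ) (φ := fun _ : Fin n => Fin n → ℂ) i)
    exact L.integrable_comp h
  · intro h
    have hrepr : f = fun a => ∑ i, ∑ j, Pi.single i (Pi.single j (f a i j)) := by
      funext a
      ext i' j'
      simp [Pi.single_apply, Finset.sum_apply, apply_ite (fun g : Fin n → ℂ => g j'),
        Finset.sum_ite_eq, Finset.sum_ite_eq']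
    rw [hrepr]
    refine integrable_finset_sum _ fun i _ => integrable_finset_sum _ fun j _ => ?_
    let L : ℂ →L[ℝ] Matrix (Fin n) (Fin n) ℂ :=
      LinearMap.toContinuousLinearMap
        (((LinearMap.single (R := ℝ) (φ := fun _ : Fin n => Fin n → ℂ) i)).comp
          (LinearMap.single (R := ℝ) (φ := fun _ : Fin n => ℂ) j))
    exact L.integrable_comp (h i j)

lemma matrix_integral_apply {f : α → Matrix (Fin n) (Fin n) ℂ} (hf : Integrable f μ)
    (i j : Fin n) : (∫ a, f a ∂μ) i j = ∫ a, f a i j ∂μ := by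
  let L : Matrix (Fin n) (Fin n) ℂ →L[ℝ] ℂ :=
    (ContinuousLinearMap.proj j).comp
      (ContinuousLinearMap.proj (R := ℝ) (φ := fun _ : Fin n => Fin n → ℂ) i)
  exact (L.integral_comp_comm hf).symm

lemma matrix_integrable_mul_left (Q : Matrix (Fin n) (Fin n) ℂ)
    {f : α → Matrix (Fin n) (Fin n) ℂ} (hf : Integrable f μ) :
    Integrable (fun a => Q * f a) μ := by
  rw [matrix_integrable_iff] at hf ⊢
  intro i j
  simp only [Matrix.mul_apply]
  exact integrable_finset_sum _ fun m _ => (hf m j).const_mul (Q i m)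

lemma matrix_mul_integral (Q : Matrix (Fin n) (Fin n) ℂ)
    {f : α → Matrix (Fin n) (Fin n) ℂ} (hf : Integrable f μ) :
    Q * ∫ a, f a ∂μ = ∫ a, Q * f a ∂μ := by
  ext i j
  rw [matrix_integral_apply (matrix_integrable_mul_left Q hf) i j]
  simp only [Matrix.mul_apply, matrix_integral_apply hf]
  simp_rw [← integral_const_mul]
  exact (integral_finset_sum _ fun m _ => ((matrix_integrable_iff.mp hf) m j).const_mul (Q i m)).symm

lemma integral_ofReal_add_ofReal_mul_I {g h : α → ℝ} (hg : Integrable g μ)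
    (hh : Integrable h μ) :
    ∫ a, ((g a : ℂ) + (h a : ℂ) * Complex.I) ∂μ
      = ((∫ a, g a ∂μ : ℝ) : ℂ) + ((∫ a, h a ∂μ : ℝ) : ℂ) * Complex.I := by
  have hg' : Integrable (fun a => ((g a : ℝ) : ℂ)) μ := hg.ofReal
  have hh' : Integrable (fun a => ((h a : ℝ) : ℂ)) μ := hh.ofReal
  have h1 : ∫ a, ((g a : ℝ) : ℂ) ∂μ = ((∫ a, g a ∂μ : ℝ) : ℂ) := integral_ofReal
  have h2 : ∫ a, ((h a : ℝ) : ℂ) ∂μ = ((∫ a, h a ∂μ : ℝ) : ℂ) := integral_ofReal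
  rw [integral_add hg' (hh'.mul_const Complex.I), integral_mul_const, h1, h2]

end MatrixHelpers

attribute [local instance] Matrix.normedAddCommGroup Matrix.normedSpace

attribute [local instance] matrixTop

/-- For a compact Lie group `G`, a smooth unitary representation `π` and an
operator `A` with Courrège form, the symbol `j_A(σ, π) = π(σ)⁻¹ (Aπ)(σ)` is given by the
Lévy–Khintchine type formula with variable characteristics. -/
theorem symbol_of_pmp_operator [CompactSpace G]
    {d : ℕ} (X : Module.Basis (Fin d) ℝ (LeftInvariantDerivation I G))
    (U : Set G) (x : Fin d → C^(⊤ : ℕ∞)⟮I, G; ℝ⟯) (hcoords : IsCanonicalCoords (fun i => X i) U x)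
    (A : C^(⊤ : ℕ∞)⟮I, G; ℝ⟯ → G → ℝ)
    (a : G → Matrix (Fin d) (Fin d) ℝ) (b : Fin d → G → ℝ) (c : G → ℝ)
    (ν : G → Measure G)
    (hform : HasCourregeForm (fun i => X i) U x A a b c ν)
    {n : ℕ} (π : G → Matrix (Fin n) (Fin n) ℂ)
    (pre pim : Fin n → Fin n → C^(⊤ : ℕ∞)⟮I, G; ℝ⟯)
    (hπ : ∀ (g : G) (i j : Fin n), π g i j = (pre i j g : ℂ) + (pim i j g : ℂ) * Complex.I)
    (hhom : ∀ g h : G, π (g * h) = π g * π h) (hone : π 1 = 1)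
    (hunitary : ∀ g : G, π g ∈ Matrix.unitaryGroup (Fin n) ℂ)
    (dpi : Fin d → Matrix (Fin n) (Fin n) ℂ)
    (hdpi : ∀ (k : Fin d) (σ : G) (i j : Fin n),
      (X k (pre i j) σ : ℂ) + (X k (pim i j) σ : ℂ) * Complex.I = (π σ * dpi k) i j) :
    ∀ σ : G,
      @Integrable _ _ SeminormedAddGroup.toContinuousENorm _ _
        (fun τ => π τ - 1 - ∑ i, x i τ • dpi i) (ν σ) ∧
      (π σ)⁻¹ * (Matrix.of fun i j => ((A (pre i j) σ : ℂ) + (A (pim i j) σ : ℂ) * Complex.I))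
        = -(c σ • (1 : Matrix (Fin n) (Fin n) ℂ)) + (∑ i, b i σ • dpi i) +
          (∑ j, ∑ k, a σ j k • (dpi j * dpi k)) +
          ∫ τ, (π τ - 1 - ∑ i, x i τ • dpi i) ∂(ν σ) := by
    classical
  have hcs : ∀ f : C^(⊤ : ℕ∞)⟮I, G; ℝ⟯, HasCompactSupport (f : G → ℝ) := fun f =>
    IsCompact.of_isClosed_subset isCompact_univ (isClosed_tsupport _) (Set.subset_univ _)
  obtain ⟨hc, hsymm, hpos, hlevy, hA⟩ := hform
  -- evaluation of sums of smooth maps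
  have csum : ∀ {ι : Type} [DecidableEq ι] (s : Finset ι) (F : ι → C^(⊤ : ℕ∞)⟮I, G; ℝ⟯) (σ : G),
      (∑ m ∈ s, F m) σ = ∑ m ∈ s, F m σ := by
    intro ι _ s F σ
    induction s using Finset.induction with
    | empty => rfl
    | insert _ _ h ih =>
      rw [Finset.sum_insert h, Finset.sum_insert h, ← ih]
      rfl
  -- derivations applied to sums of smooth maps
  have Xsum : ∀ (Y : LeftInvariantDerivation I G) {ι : Type} [DecidableEq ι] (s : Finset ι)
      (F : ι → C^(⊤ : ℕ∞)⟮I, G; ℝ⟯), Y (∑ m ∈ s, F m) = ∑ m ∈ s, Y (F m) := by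
    intro Y ι _ s F
    induction s using Finset.induction with
    | empty =>
      rw [Finset.sum_empty, Finset.sum_empty]
      exact LeftInvariantDerivation.map_zero Y
    | insert _ _ h ih =>
      rw [Finset.sum_insert h, Finset.sum_insert h, LeftInvariantDerivation.map_add, ih]
  have hev : ∀ (r s : ℝ) (f g : C^(⊤ : ℕ∞)⟮I, G; ℝ⟯) (σ' : G),
      (r • f - s • g) σ' = r * f σ' - s * g σ' := fun r s f g σ' => rfl
  have hev' : ∀ (r s : ℝ) (f g : C^(⊤ : ℕ∞)⟮I, G; ℝ⟯) (σ' : G),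
      (r • f + s • g) σ' = r * f σ' + s * g σ' := fun r s f g σ' => rfl
  -- real and imaginary parts of the first derivatives
  have hdre : ∀ (k : Fin d) (σ : G) (i l : Fin n),
      X k (pre i l) σ = ((π σ * dpi k) i l).re := by
    intro k σ i l
    have h := congrArg Complex.re (hdpi k σ i l)
    simpa using h
  have hdim : ∀ (k : Fin d) (σ : G) (i l : Fin n),
      X k (pim i l) σ = ((π σ * dpi k) i l).im := by
    intro k σ i l
    have h := congrArg Complex.im (hdpi k σ i l)
    simpa using h
  -- first derivatives as linear combinations of matrix coefficients
  have hfre : ∀ (k : Fin d) (i l : Fin n),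
      X k (pre i l) = ∑ m, ((dpi k m l).re • pre i m - (dpi k m l).im • pim i m) := by
    intro k i l
    apply ContMDiffMap.ext
    intro σ'
    rw [csum]
    rw [hdre k σ' i l, Matrix.mul_apply, Complex.re_sum]
    refine Finset.sum_congr rfl fun m _ => ?_
    rw [hπ σ' i m, hev]
    simp [Complex.mul_re]
    ring
  have hfim : ∀ (k : Fin d) (i l : Fin n),
      X k (pim i l) = ∑ m, ((dpi k m l).im • pre i m + (dpi k m l).re • pim i m) := by
    intro k i l
    apply ContMDiffMap.ext
    intro σ'
    rw [csum]
    rw [hdim k σ' i l, Matrix.mul_apply, Complex.im_sum]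
    refine Finset.sum_congr rfl fun m _ => ?_
    rw [hπ σ' i m, hev']
    simp [Complex.mul_im]
    ring
  -- second derivatives
  have hd2 : ∀ (j k : Fin d) (σ : G) (i l : Fin n),
      ((X j (X k (pre i l)) σ : ℝ) : ℂ) + ((X j (X k (pim i l)) σ : ℝ) : ℂ) * Complex.I
        = (π σ * dpi j * dpi k) i l := by
    intro j k σ i l
    rw [hfre k i l, hfim k i l, Xsum, Xsum]
    simp only [LeftInvariantDerivation.map_sub, LeftInvariantDerivation.map_add,
      LeftInvariantDerivation.map_smul]
    rw [csum, csum, Matrix.mul_apply]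
    push_cast
    rw [Finset.sum_mul, ← Finset.sum_add_distrib]
    refine Finset.sum_congr rfl fun m _ => ?_
    rw [hev, hev', ← hdpi j σ i m]
    apply Complex.ext <;>
      simp [Complex.mul_re, Complex.mul_im, Complex.add_re, Complex.add_im] <;> ring
  intro σ
  have hP : π σ * star (π σ) = 1 := (Matrix.mem_unitaryGroup_iff).mp (hunitary σ)
  have hdet : IsUnit (π σ).det := Matrix.isUnit_det_of_right_inverse hP
  have hPinv : (π σ)⁻¹ * π σ = 1 := Matrix.nonsing_inv_mul _ hdet
  have hint1 : ∀ i l : Fin n, Integrable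
      (fun τ => pre i l (σ * τ) - pre i l σ - ∑ m, x m τ * X m (pre i l) σ) (ν σ) :=
    fun i l => (hA (pre i l) (hcs _) σ).1
  have hint2 : ∀ i l : Fin n, Integrable
      (fun τ => pim i l (σ * τ) - pim i l σ - ∑ m, x m τ * X m (pim i l) σ) (ν σ) :=
    fun i l => (hA (pim i l) (hcs _) σ).1
  -- the matrix-valued integrand, entrywise
  have hPF : ∀ (τ : G) (i l : Fin n),
      (π σ * (π τ - 1 - ∑ m, x m τ • dpi m)) i l
        = ((pre i l (σ * τ) - pre i l σ - ∑ m, x m τ * X m (pre i l) σ : ℝ) : ℂ)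
          + ((pim i l (σ * τ) - pim i l σ - ∑ m, x m τ * X m (pim i l) σ : ℝ) : ℂ)
            * Complex.I := by
    intro τ i l
    have hmat : π σ * (π τ - 1 - ∑ m, x m τ • dpi m)
        = π (σ * τ) - π σ - ∑ m, x m τ • (π σ * dpi m) := by
      rw [mul_sub, mul_sub, mul_one, ← hhom, Finset.mul_sum]
      simp only [mul_smul_comm]
    rw [hmat]
    simp only [Matrix.sub_apply, Matrix.sum_apply, Matrix.smul_apply, Complex.real_smul]
    rw [hπ (σ * τ) i l, hπ σ i l]
    have esum : (∑ m, (x m τ : ℂ) * (π σ * dpi m) i l)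
        = (∑ m, (x m τ : ℂ) * ((X m (pre i l) σ : ℝ) : ℂ))
          + (∑ m, (x m τ : ℂ) * ((X m (pim i l) σ : ℝ) : ℂ)) * Complex.I := by
      rw [Finset.sum_mul, ← Finset.sum_add_distrib]
      refine Finset.sum_congr rfl fun m _ => ?_
      rw [← hdpi m σ i l]
      ring
    rw [esum]
    push_cast
    ring
  have hintPF : Integrable (fun τ => π σ * (π τ - 1 - ∑ m, x m τ • dpi m)) (ν σ) := by
    rw [matrix_integrable_iff]
    intro i l
    have h1 : Integrable
        (fun τ => ((pre i l (σ * τ) - pre i l σ - ∑ m, x m τ * X m (pre i l) σ : ℝ) : ℂ))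
        (ν σ) := (hint1 i l).ofReal
    have h2 : Integrable
        (fun τ => ((pim i l (σ * τ) - pim i l σ - ∑ m, x m τ * X m (pim i l) σ : ℝ) : ℂ))
        (ν σ) := (hint2 i l).ofReal
    exact (h1.add (h2.mul_const Complex.I)).congr
      (Filter.EventuallyEq.of_eq (funext fun τ => (hPF τ i l).symm))
  have hintF : Integrable (fun τ => π τ - 1 - ∑ i, x i τ • dpi i) (ν σ) := by
    have h := matrix_integrable_mul_left (π σ)⁻¹ hintPF
    refine h.congr (Filter.EventuallyEq.of_eq (funext fun τ => ?_))
    rw [← Matrix.mul_assoc, hPinv, Matrix.one_mul]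
  refine ⟨hintF, ?_⟩
  have key : ∀ i l : Fin n,
      ((A (pre i l) σ : ℝ) : ℂ) + ((A (pim i l) σ : ℝ) : ℂ) * Complex.I
        = -((c σ : ℂ) * π σ i l) + (∑ m, (b m σ : ℂ) * (π σ * dpi m) i l)
          + (∑ j, ∑ k, (a σ j k : ℂ) * (π σ * dpi j * dpi k) i l)
          + ∫ τ, (π σ * (π τ - 1 - ∑ m, x m τ • dpi m)) i l ∂(ν σ) := by
    intro i l
    have e1 : (∑ m, (b m σ : ℂ) * (π σ * dpi m) i l)
        = (∑ m, (b m σ : ℂ) * ((X m (pre i l) σ : ℝ) : ℂ))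
          + (∑ m, (b m σ : ℂ) * ((X m (pim i l) σ : ℝ) : ℂ)) * Complex.I := by
      rw [Finset.sum_mul, ← Finset.sum_add_distrib]
      refine Finset.sum_congr rfl fun m _ => ?_
      rw [← hdpi m σ i l]
      ring
    have e2 : (∑ j, ∑ k, (a σ j k : ℂ) * (π σ * dpi j * dpi k) i l)
        = (∑ j, ∑ k, (a σ j k : ℂ) * ((X j (X k (pre i l)) σ : ℝ) : ℂ))
          + (∑ j, ∑ k, (a σ j k : ℂ) * ((X j (X k (pim i l)) σ : ℝ) : ℂ)) * Complex.I := by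
      rw [Finset.sum_mul, ← Finset.sum_add_distrib]
      refine Finset.sum_congr rfl fun j _ => ?_
      rw [Finset.sum_mul, ← Finset.sum_add_distrib]
      refine Finset.sum_congr rfl fun k _ => ?_
      rw [← hd2 j k σ i l]
      ring
    have hI : (∫ τ, (π σ * (π τ - 1 - ∑ m, x m τ • dpi m)) i l ∂(ν σ))
        = ((∫ τ, (pre i l (σ * τ) - pre i l σ - ∑ m, x m τ * X m (pre i l) σ) ∂(ν σ) : ℝ) : ℂ)
          + ((∫ τ, (pim i l (σ * τ) - pim i l σ - ∑ m, x m τ * X m (pim i l) σ) ∂(ν σ) : ℝ) : ℂ)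
            * Complex.I := by
      rw [show (fun τ => (π σ * (π τ - 1 - ∑ m, x m τ • dpi m)) i l)
          = (fun τ => ((pre i l (σ * τ) - pre i l σ - ∑ m, x m τ * X m (pre i l) σ : ℝ) : ℂ)
            + ((pim i l (σ * τ) - pim i l σ - ∑ m, x m τ * X m (pim i l) σ : ℝ) : ℂ)
              * Complex.I)
          from funext fun τ => hPF τ i l]
      exact integral_ofReal_add_ofReal_mul_I (hint1 i l) (hint2 i l)
    rw [(hA (pre i l) (hcs _) σ).2, (hA (pim i l) (hcs _) σ).2, e1, e2, hI, hπ σ i l]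
    push_cast
    ring
  have hPint : π σ * (∫ τ, (π τ - 1 - ∑ i, x i τ • dpi i) ∂(ν σ))
      = ∫ τ, π σ * (π τ - 1 - ∑ i, x i τ • dpi i) ∂(ν σ) := matrix_mul_integral _ hintF
  have hMat : (Matrix.of fun i j =>
        ((A (pre i j) σ : ℝ) : ℂ) + ((A (pim i j) σ : ℝ) : ℂ) * Complex.I)
      = π σ * (-(c σ • (1 : Matrix (Fin n) (Fin n) ℂ)) + (∑ i, b i σ • dpi i)
          + (∑ j, ∑ k, a σ j k • (dpi j * dpi k))
          + ∫ τ, (π τ - 1 - ∑ i, x i τ • dpi i) ∂(ν σ)) := by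
    ext i l
    rw [Matrix.of_apply, key i l]
    rw [mul_add, mul_add, mul_add, hPint]
    simp only [Matrix.add_apply, mul_neg, Matrix.neg_apply, mul_smul_comm, Matrix.mul_one,
      Finset.mul_sum, Matrix.smul_apply, Matrix.sum_apply, Complex.real_smul,
      ← Matrix.mul_assoc]
    rw [matrix_integral_apply hintPF i l]
  rw [hMat, ← Matrix.mul_assoc, hPinv, Matrix.one_mul]
end
end
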